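/- arXiv:math/0610030 — 5 statements merged into one kernel-verified Lean document; each statement's English description precedes it below -/
import Mathlib

section
/- Let A be a finite nonempty set of positive integers and let τ be the POP 1'-2-1''. Then in the formal power series ring ℚ⟦x,y⟧ one has Σ_{n,m≥0} |C_{n;m}^A(τ)| x^n y^m = 1/∏_{a∈A}(1−x^a y)² − Σ_{a∈A} x^a y / ∏_{b∈A, b≥a}(1−x^b y)², where each factor (1−x^a y) is invertible in ℚ⟦x,y⟧. -/
/-- A composition of `n` with `m` parts, all parts in `A`. -/
def IsCompOf (A : Finset ℕ) (n m : ℕ) (σ : List ℕ) : Prop :=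
  (∀ x ∈ σ, x ∈ A) ∧ σ.sum = n ∧ σ.length = m

/-- `σ` contains the POP 1'-2-1'': there are indices `i < j` with `j+1` still a valid
position, such that `σ i < σ j` and `σ (j+1) < σ j` (0-indexed). -/
def Contains121 (σ : List ℕ) : Prop :=
  ∃ i j : ℕ, i < j ∧ j + 1 < σ.length ∧
    σ.getD i 0 < σ.getD j 0 ∧ σ.getD (j + 1) 0 < σ.getD j 0

/-- The number of compositions of `n` with `m` parts in `A` avoiding 1'-2-1''. -/
noncomputable def count121 (A : Finset ℕ) (n m : ℕ) : ℕ :=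
  Set.ncard {σ : List ℕ | IsCompOf A n m σ ∧ ¬ Contains121 σ}

/-!
A composition avoids 1'-2-1'' exactly when it is a weakly decreasing word `δ` followed by a weakly
increasing word `ι`, and the split is unique once we ask that some part of `δ` lie strictly below
every part of `ι` (a "valley split"). Reading `δ` and `ι` as multisets, pairs of multisets over `A`
are counted by `1/∏ (1 - x^a y)²`, and they are exactly the avoiders plus the pairs whose overall
minimum `a` occurs in the second multiset. Deleting one copy of `a` from the second multiset
identifies the latter with arbitrary pairs of multisets over `{b ∈ A | a ≤ b}`, shifted by `x^a y`.
-/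

namespace POP121

open MvPowerSeries Finset

section Bivariate

variable {R : Type*} [CommRing R]

noncomputable def bidegree (n m : ℕ) : Fin 2 →₀ ℕ := Finsupp.single 0 n + Finsupp.single 1 m

@[simp] lemma bidegree_apply_zero (n m : ℕ) : bidegree n m 0 = n := by simp [bidegree]

@[simp] lemma bidegree_apply_one (n m : ℕ) : bidegree n m 1 = m := by simp [bidegree]

lemma bidegree_le_bidegree {a b n m : ℕ} : bidegree a b ≤ bidegree n m ↔ a ≤ n ∧ b ≤ m := by
  simp [Finsupp.le_def, Fin.forall_fin_two]

lemma bidegree_sub_bidegree (a b n m : ℕ) :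
    bidegree n m - bidegree a b = bidegree (n - a) (m - b) := by
  ext i; fin_cases i <;> simp

lemma eq_bidegree (d : Fin 2 →₀ ℕ) : d = bidegree (d 0) (d 1) := by
  ext i; fin_cases i <;> simp

lemma ext_bidegree {f g : MvPowerSeries (Fin 2) R}
    (h : ∀ n m, coeff (bidegree n m) f = coeff (bidegree n m) g) : f = g := by
  ext d
  rw [eq_bidegree d]
  exact h _ _

def ofCoeffs (c : ℕ → ℕ → R) : MvPowerSeries (Fin 2) R := fun d => c (d 0) (d 1)

@[simp] lemma coeff_ofCoeffs (c : ℕ → ℕ → R) (n m : ℕ) :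
    coeff (bidegree n m) (ofCoeffs c) = c n m := by
  simp [ofCoeffs, coeff_apply]

lemma ofCoeffs_eq_one {c : ℕ → ℕ → R} (h : ∀ n m, c n m = if n = 0 ∧ m = 0 then 1 else 0) :
    ofCoeffs c = 1 := by
  refine ext_bidegree fun n m => ?_
  rw [coeff_ofCoeffs, h, coeff_one]
  congr 1
  simp [Finsupp.ext_iff, Fin.forall_fin_two]

lemma X_pow_mul_X_eq_monomial (a : ℕ) :
    (X 0 : MvPowerSeries (Fin 2) R) ^ a * X 1 = monomial (bidegree a 1) 1 := by
  rw [X_pow_eq, X, monomial_mul_monomial, one_mul, bidegree]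

lemma coeff_X_pow_mul_X_mul (f : MvPowerSeries (Fin 2) R) (a n m : ℕ) :
    coeff (bidegree n m) ((X 0) ^ a * X 1 * f)
      = if a ≤ n ∧ 1 ≤ m then coeff (bidegree (n - a) (m - 1)) f else 0 := by
  simp only [X_pow_mul_X_eq_monomial, coeff_monomial_mul, bidegree_le_bidegree,
    bidegree_sub_bidegree, one_mul]

lemma ofCoeffs_mul_one_sub_X_pow_mul_X {c c' : ℕ → ℕ → R} (a : ℕ)
    (h : ∀ n m, c n m = c' n m + if a ≤ n ∧ 1 ≤ m then c (n - a) (m - 1) else 0) :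
    ofCoeffs c * (1 - X 0 ^ a * X 1) = ofCoeffs c' := by
  refine ext_bidegree fun n m => ?_
  rw [mul_sub, mul_one, map_sub, mul_comm, coeff_X_pow_mul_X_mul, coeff_ofCoeffs, coeff_ofCoeffs,
    h n m]
  split_ifs <;> simp

lemma isUnit_one_sub_X_pow_mul_X (a : ℕ) :
    IsUnit (1 - (X 0 : MvPowerSeries (Fin 2) R) ^ a * X 1) := by
  simp [isUnit_iff_constantCoeff]

end Bivariate

section MultisetPairs

def IsPairOf (S T : Finset ℕ) (n m : ℕ) (p : Multiset ℕ × Multiset ℕ) : Prop :=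
  (∀ x ∈ p.1, x ∈ S) ∧ (∀ x ∈ p.2, x ∈ T) ∧ p.1.sum + p.2.sum = n ∧
    Multiset.card p.1 + Multiset.card p.2 = m

instance (S T : Finset ℕ) (n m : ℕ) : DecidablePred (IsPairOf S T n m) :=
  fun _ => inferInstanceAs (Decidable (_ ∧ _))

lemma le_nsmul_val {α : Type*} [DecidableEq α] {S : Finset α} {M : Multiset α} {m : ℕ}
    (hM : ∀ x ∈ M, x ∈ S) (hm : Multiset.card M ≤ m) : M ≤ m • S.val := by
  refine Multiset.le_iff_count.2 fun x => ?_
  by_cases hx : x ∈ S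
  · rw [Multiset.count_nsmul, Multiset.count_eq_one_of_mem S.nodup hx, mul_one]
    exact (Multiset.count_le_card x M).trans hm
  · rw [Multiset.count_eq_zero_of_notMem fun h => hx (hM x h)]
    exact Nat.zero_le _

def multisetPairs (S T : Finset ℕ) (n m : ℕ) : Finset (Multiset ℕ × Multiset ℕ) :=
  ((m • S.val).powerset.toFinset ×ˢ (m • T.val).powerset.toFinset).filter (IsPairOf S T n m)

@[simp] lemma mem_multisetPairs {S T : Finset ℕ} {n m : ℕ} {p : Multiset ℕ × Multiset ℕ} :
    p ∈ multisetPairs S T n m ↔ IsPairOf S T n m p := by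
  refine ⟨fun hp => (mem_filter.1 hp).2, fun hp => mem_filter.2 ⟨?_, hp⟩⟩
  obtain ⟨h₁, h₂, -, hm⟩ := hp
  simp only [mem_product, Multiset.mem_toFinset, Multiset.mem_powerset]
  exact ⟨le_nsmul_val h₁ (by omega), le_nsmul_val h₂ (by omega)⟩

noncomputable def pairCount (S T : Finset ℕ) (n m : ℕ) : ℕ := (multisetPairs S T n m).card

lemma pairCount_comm (S T : Finset ℕ) (n m : ℕ) : pairCount S T n m = pairCount T S n m := by
  refine card_nbij' Prod.swap Prod.swap ?_ ?_ (fun _ _ => rfl) (fun _ _ => rfl) <;>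
  · rintro ⟨M, N⟩ hp
    obtain ⟨h₁, h₂, hs, hc⟩ := mem_multisetPairs.1 hp
    exact mem_multisetPairs.2 ⟨h₂, h₁, by simp only [Prod.swap] at hs ⊢; omega,
      by simp only [Prod.swap] at hc ⊢; omega⟩

lemma pairCount_empty (n m : ℕ) : pairCount ∅ ∅ n m = if n = 0 ∧ m = 0 then 1 else 0 := by
  have h : multisetPairs ∅ ∅ n m = if n = 0 ∧ m = 0 then {(0, 0)} else ∅ := by
    ext ⟨M, N⟩
    have hM : (∀ x ∈ M, x ∈ (∅ : Finset ℕ)) ↔ M = 0 := by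
      simp [Multiset.eq_zero_iff_forall_notMem]
    have hN : (∀ x ∈ N, x ∈ (∅ : Finset ℕ)) ↔ N = 0 := by
      simp [Multiset.eq_zero_iff_forall_notMem]
    rw [mem_multisetPairs, IsPairOf, hM, hN]
    split_ifs with hnm <;> aesop
  rw [pairCount, h]
  split_ifs <;> rfl

lemma filter_mem_snd_multisetPairs {S T : Finset ℕ} {a n m : ℕ} (ha : a ∈ T) (hn : a ≤ n)
    (hm : 1 ≤ m) :
    (multisetPairs S T n m).filter (a ∈ ·.2)
      = (multisetPairs S T (n - a) (m - 1)).image fun p => (p.1, a ::ₘ p.2) := by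
  ext ⟨M, N⟩
  simp only [mem_filter, mem_image, mem_multisetPairs, IsPairOf, Prod.mk.injEq]
  constructor
  · rintro ⟨⟨h₁, h₂, hs, hc⟩, haN⟩
    refine ⟨(M, N.erase a), ⟨h₁, fun x hx => h₂ x (Multiset.mem_of_mem_erase hx), ?_, ?_⟩,
      rfl, Multiset.cons_erase haN⟩
    · have := Multiset.sum_erase haN
      dsimp only; omega
    · have := Multiset.card_erase_of_mem haN
      rw [Nat.pred_eq_sub_one] at this
      have := Multiset.card_pos_iff_exists_mem.2 ⟨a, haN⟩
      dsimp only; omega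
  · rintro ⟨⟨M', N'⟩, ⟨h₁, h₂, hs, hc⟩, rfl, rfl⟩
    refine ⟨⟨h₁, ?_, ?_, ?_⟩, Multiset.mem_cons_self a N'⟩
    · simpa [or_imp, forall_and] using ⟨ha, h₂⟩
    · simp only [Multiset.sum_cons] at hs ⊢; omega
    · simp only [Multiset.card_cons] at hc ⊢; omega

lemma card_filter_mem_snd_multisetPairs {S T : Finset ℕ} {a : ℕ} (ha : a ∈ T) (n m : ℕ) :
    ((multisetPairs S T n m).filter (a ∈ ·.2)).card
      = if a ≤ n ∧ 1 ≤ m then pairCount S T (n - a) (m - 1) else 0 := by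
  split_ifs with h
  · rw [filter_mem_snd_multisetPairs ha h.1 h.2, card_image_of_injective, pairCount]
    intro p q hpq
    simp only [Prod.mk.injEq, Multiset.cons_inj_right] at hpq
    exact Prod.ext hpq.1 hpq.2
  · refine card_eq_zero.2 (filter_eq_empty_iff.2 ?_)
    rintro ⟨M, N⟩ hp haN
    obtain ⟨-, -, hs, hc⟩ := mem_multisetPairs.1 hp
    obtain ⟨N', rfl⟩ := Multiset.exists_cons_of_mem haN
    simp only [Multiset.sum_cons, Multiset.card_cons] at hs hc
    omega

lemma pairCount_insert {S T : Finset ℕ} {a : ℕ} (ha : a ∉ T) (n m : ℕ) :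
    pairCount S (insert a T) n m
      = pairCount S T n m +
          if a ≤ n ∧ 1 ≤ m then pairCount S (insert a T) (n - a) (m - 1) else 0 := by
  have hnot : (multisetPairs S (insert a T) n m).filter (a ∉ ·.2) = multisetPairs S T n m := by
    ext ⟨M, N⟩
    simp only [mem_filter, mem_multisetPairs, IsPairOf, mem_insert]
    constructor
    · rintro ⟨⟨h₁, h₂, hs, hc⟩, haN⟩
      exact ⟨h₁, fun x hx => (h₂ x hx).resolve_left (by rintro rfl; exact haN hx), hs, hc⟩
    · rintro ⟨h₁, h₂, hs, hc⟩
      exact ⟨⟨h₁, fun x hx => Or.inr (h₂ x hx), hs, hc⟩, fun haN => ha (h₂ a haN)⟩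
  rw [← card_filter_mem_snd_multisetPairs (mem_insert_self a T), pairCount, pairCount, ← hnot,
    add_comm, card_filter_add_card_filter_not]

end MultisetPairs

section GeneratingFunction

variable {R : Type*} [CommRing R]

lemma ofCoeffs_pairCount_mul_prod (S T : Finset ℕ) :
    ofCoeffs (fun n m => (pairCount S T n m : R)) * ∏ b ∈ T, (1 - X 0 ^ b * X 1)
      = ofCoeffs fun n m => (pairCount S ∅ n m : R) := by
  induction T using Finset.induction_on with
  | empty => rw [prod_empty, mul_one]
  | insert a T ha ih =>
    rw [prod_insert ha, ← mul_assoc, ofCoeffs_mul_one_sub_X_pow_mul_X a, ih]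
    intro n m
    rw [pairCount_insert ha]
    split_ifs <;> simp

lemma ofCoeffs_pairCount_mul_prod_mul_prod (S T : Finset ℕ) :
    ofCoeffs (fun n m => (pairCount S T n m : R))
      * ((∏ a ∈ S, (1 - X 0 ^ a * X 1)) * ∏ b ∈ T, (1 - X 0 ^ b * X 1)) = 1 := by
  rw [mul_comm (∏ a ∈ S, _), ← mul_assoc, ofCoeffs_pairCount_mul_prod]
  simp_rw [pairCount_comm S ∅]
  rw [ofCoeffs_pairCount_mul_prod]
  exact ofCoeffs_eq_one fun n m => by rw [pairCount_empty]; split_ifs <;> simp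

lemma inv_prod_sq_eq_ofCoeffs_pairCount {k : Type*} [Field k] (S : Finset ℕ) :
    (∏ a ∈ S, (1 - (X 0 : MvPowerSeries (Fin 2) k) ^ a * X 1) ^ 2)⁻¹
      = ofCoeffs fun n m => (pairCount S S n m : k) := by
  rw [eq_comm, MvPowerSeries.eq_inv_iff_mul_eq_one (by simp), prod_pow, sq]
  exact ofCoeffs_pairCount_mul_prod_mul_prod S S

end GeneratingFunction

section Lists

lemma contains121_iff {σ : List ℕ} :
    Contains121 σ ↔ ∃ l₁ b c l₂, σ = l₁ ++ b :: c :: l₂ ∧ (∃ a ∈ l₁, a < b) ∧ c < b := by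
  constructor
  · rintro ⟨i, j, hij, hj, hab, hcb⟩
    rw [List.getD_eq_getElem _ _ (by omega), List.getD_eq_getElem _ _ (by omega)] at hab
    rw [List.getD_eq_getElem _ _ hj, List.getD_eq_getElem _ _ (by omega)] at hcb
    refine ⟨σ.take j, σ[j], σ[j + 1], σ.drop (j + 2), ?_, ⟨σ[i], ?_, hab⟩, hcb⟩
    · conv_lhs => rw [← List.take_append_drop j σ, List.drop_eq_getElem_cons (by omega),
        List.drop_eq_getElem_cons hj]
    · rw [← List.getElem_take (j := j) (h := by rw [List.length_take]; omega)]
      exact List.getElem_mem _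
  · rintro ⟨l₁, b, c, l₂, rfl, ⟨a, ha, hab⟩, hcb⟩
    obtain ⟨i, hi, rfl⟩ := List.getElem_of_mem ha
    refine ⟨i, l₁.length, hi, by simp, ?_, ?_⟩
    · rw [List.getD_append _ _ _ _ hi, List.getD_append_right _ _ _ _ le_rfl]
      rwa [List.getD_eq_getElem _ _ hi, Nat.sub_self, List.getD_cons_zero]
    · rw [List.getD_append_right _ _ _ _ le_rfl, List.getD_append_right _ _ _ _ (by omega)]
      simpa using hcb

lemma contains121_cons (x : ℕ) {σ : List ℕ} (h : Contains121 σ) : Contains121 (x :: σ) := by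
  obtain ⟨l₁, b, c, l₂, rfl, ⟨a, ha, hab⟩, hcb⟩ := contains121_iff.1 h
  exact contains121_iff.2 ⟨x :: l₁, b, c, l₂, rfl, ⟨a, List.mem_cons_of_mem x ha, hab⟩, hcb⟩

def IsValleySplit (δ ι : List ℕ) : Prop :=
  δ.Pairwise (· ≥ ·) ∧ ι.Pairwise (· ≤ ·) ∧ (ι = [] ∨ ∃ w ∈ δ, ∀ b ∈ ι, w < b)

lemma not_contains121_append {δ ι : List ℕ} (hδ : δ.Pairwise (· ≥ ·)) (hι : ι.Pairwise (· ≤ ·)) :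
    ¬ Contains121 (δ ++ ι) := by
  rw [contains121_iff]
  rintro ⟨l₁, b, c, l₂, h, ⟨a, ha, hab⟩, hcb⟩
  have hιbc : ∀ u, ι ≠ u ++ b :: c :: l₂ := by
    rintro u rfl
    have := (List.pairwise_cons.1 (List.pairwise_append.1 hι).2.1).1 c (by simp)
    omega
  rcases List.append_eq_append_iff.1 h with ⟨u, -, hu⟩ | ⟨_ | ⟨b', u⟩, rfl, hu⟩
  · exact hιbc u hu
  · exact hιbc [] hu.symm
  · obtain ⟨rfl, -⟩ := List.cons_eq_cons.1 hu
    have := (List.pairwise_append.1 hδ).2.2 a ha b (by simp)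
    omega

lemma pairwise_le_of_not_contains121 {y : ℕ} {rest l₀ : List ℕ} (hl₀ : ∃ w ∈ l₀, w < y)
    (h : ¬ Contains121 (l₀ ++ y :: rest)) : (y :: rest).Pairwise (· ≤ ·) := by
  induction rest generalizing l₀ y with
  | nil => exact List.pairwise_singleton _ y
  | cons z t ih =>
    have hyz : y ≤ z := by
      by_contra! hzy
      exact h (contains121_iff.2 ⟨l₀, y, z, t, rfl, hl₀, hzy⟩)
    obtain ⟨w, hw, hwy⟩ := hl₀
    have hzt := ih (l₀ := l₀ ++ [y]) (y := z) ⟨w, List.mem_append_left _ hw, by omega⟩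
      (by simpa using h)
    refine List.pairwise_cons.2 ⟨fun b hb => ?_, hzt⟩
    rcases List.mem_cons.1 hb with rfl | hb
    · exact hyz
    · exact hyz.trans ((List.pairwise_cons.1 hzt).1 b hb)

lemma exists_isValleySplit {σ : List ℕ} (h : ¬ Contains121 σ) :
    ∃ δ ι, σ = δ ++ ι ∧ IsValleySplit δ ι := by
  induction σ with
  | nil => exact ⟨[], [], rfl, by simp [IsValleySplit]⟩
  | cons x τ ih =>
    obtain ⟨δ, ι, rfl, hδ, hι, hsep⟩ := ih fun hτ => h (contains121_cons x hτ)
    rcases δ with _ | ⟨y, δ⟩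
    · obtain rfl : ι = [] := by simpa using hsep
      exact ⟨[x], [], rfl, by simp [IsValleySplit]⟩
    by_cases hyx : y ≤ x
    · refine ⟨x :: y :: δ, ι, rfl, List.pairwise_cons.2 ⟨fun b hb => ?_, hδ⟩, hι, ?_⟩
      · rcases List.mem_cons.1 hb with rfl | hb
        · exact hyx
        · exact ((List.pairwise_cons.1 hδ).1 b hb).trans hyx
      · exact hsep.imp_right fun ⟨w, hw, hwι⟩ => ⟨w, List.mem_cons_of_mem x hw, hwι⟩
    · have hinc : (y :: (δ ++ ι)).Pairwise (· ≤ ·) :=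
        pairwise_le_of_not_contains121 (l₀ := [x]) ⟨x, List.mem_singleton_self x, by omega⟩
          (by simpa using h)
      refine ⟨[x], y :: (δ ++ ι), rfl, List.pairwise_singleton _ x, hinc,
        Or.inr ⟨x, List.mem_singleton_self x, fun b hb => ?_⟩⟩
      rcases List.mem_cons.1 hb with rfl | hb
      · omega
      · have := (List.pairwise_cons.1 hinc).1 b hb
        omega

lemma eq_nil_of_isValleySplit_of_pairwise_append {δ u ι : List ℕ}
    (hsplit : IsValleySplit δ (u ++ ι)) (hδu : (δ ++ u).Pairwise (· ≥ ·)) : u = [] := by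
  rcases u with _ | ⟨b, u⟩
  · rfl
  obtain ⟨w, hw, hwb⟩ := hsplit.2.2.resolve_left (List.cons_ne_nil _ _)
  have := (List.pairwise_append.1 hδu).2.2 w hw b (List.mem_cons_self)
  have := hwb b (by simp)
  omega

lemma IsValleySplit.unique {δ ι δ' ι' : List ℕ} (h : IsValleySplit δ ι) (h' : IsValleySplit δ' ι')
    (heq : δ ++ ι = δ' ++ ι') : δ = δ' ∧ ι = ι' := by
  rcases List.append_eq_append_iff.1 heq with ⟨u, rfl, rfl⟩ | ⟨u, rfl, rfl⟩
  · obtain rfl := eq_nil_of_isValleySplit_of_pairwise_append h h'.1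
    simp
  · obtain rfl := eq_nil_of_isValleySplit_of_pairwise_append h' h.1
    simp

end Lists

section Avoiders

def Separated (p : Multiset ℕ × Multiset ℕ) : Prop := p.2 = 0 ∨ ∃ w ∈ p.1, ∀ b ∈ p.2, w < b

instance : DecidablePred Separated :=
  fun _ => @instDecidableOr _ _ _ Multiset.decidableExistsMultiset

def valley (p : Multiset ℕ × Multiset ℕ) : List ℕ := p.1.sort (· ≥ ·) ++ p.2.sort (· ≤ ·)

lemma isValleySplit_sort_iff (p : Multiset ℕ × Multiset ℕ) :
    IsValleySplit (p.1.sort (· ≥ ·)) (p.2.sort (· ≤ ·)) ↔ Separated p := by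
  simp [IsValleySplit, Separated, Multiset.pairwise_sort, Multiset.mem_sort,
    ← List.length_eq_zero_iff]

lemma sort_coe_of_pairwise {α : Type*} {r : α → α → Prop} [DecidableRel r] [IsTrans α r]
    [Std.Antisymm r] [Std.Total r] {l : List α} (h : l.Pairwise r) :
    (l : Multiset α).sort r = l := by
  rw [Multiset.coe_sort, List.mergeSort_eq_self _ h]

lemma count121_eq_card_filter_separated (A : Finset ℕ) (n m : ℕ) :
    count121 A n m = ((multisetPairs A A n m).filter Separated).card := by
  have hset : {σ | IsCompOf A n m σ ∧ ¬ Contains121 σ}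
      = ((multisetPairs A A n m).filter Separated).image valley := by
    ext σ
    simp only [Set.mem_ofPred_eq, coe_image, coe_filter, mem_multisetPairs, Set.mem_image]
    constructor
    · rintro ⟨⟨hA, hsum, hlen⟩, havoid⟩
      obtain ⟨δ, ι, rfl, hsplit⟩ := exists_isValleySplit havoid
      refine ⟨(δ, ι), ⟨⟨fun x hx => hA x (by simp_all), fun x hx => hA x (by simp_all),
        by simpa using hsum, by simpa using hlen⟩, by simpa [Separated] using hsplit.2.2⟩, ?_⟩
      simp [valley, sort_coe_of_pairwise hsplit.1, sort_coe_of_pairwise hsplit.2.1]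
    · rintro ⟨p, ⟨⟨h₁, h₂, hsum, hcard⟩, -⟩, rfl⟩
      refine ⟨⟨fun x hx => ?_, ?_, ?_⟩, not_contains121_append (Multiset.pairwise_sort _ _)
        (Multiset.pairwise_sort _ _)⟩
      · rcases List.mem_append.1 hx with hx | hx
        · exact h₁ x ((Multiset.mem_sort _).1 hx)
        · exact h₂ x ((Multiset.mem_sort _).1 hx)
      · rw [valley, List.sum_append, ← Multiset.sum_coe, ← Multiset.sum_coe, Multiset.sort_eq,
          Multiset.sort_eq, hsum]
      · rw [valley, List.length_append, Multiset.length_sort, Multiset.length_sort, hcard]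
  rw [count121, hset, Set.ncard_coe_finset, card_image_of_injOn]
  rintro p hp q hq hpq
  obtain ⟨h₁, h₂⟩ := IsValleySplit.unique ((isValleySplit_sort_iff p).2 (mem_filter.1 hp).2)
    ((isValleySplit_sort_iff q).2 (mem_filter.1 hq).2) hpq
  rw [Prod.ext_iff, ← Multiset.sort_eq p.1 (· ≥ ·), ← Multiset.sort_eq p.2 (· ≤ ·), h₁, h₂,
    Multiset.sort_eq, Multiset.sort_eq]
  exact ⟨rfl, rfl⟩

lemma not_separated_iff {A : Finset ℕ} {n m : ℕ} {p : Multiset ℕ × Multiset ℕ}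
    (hp : p ∈ multisetPairs A A n m) :
    ¬ Separated p ↔ ∃ a ∈ A, a ∈ p.2 ∧ ∀ x ∈ p.1 + p.2, a ≤ x := by
  constructor
  · intro h
    simp only [Separated, not_or, not_exists, not_and, not_forall, not_lt] at h
    obtain ⟨hne, hlow⟩ := h
    obtain ⟨a, ha, hmin⟩ := Multiset.exists_min_image id hne
    refine ⟨a, (mem_multisetPairs.1 hp).2.1 a ha, ha, fun x hx => ?_⟩
    rcases Multiset.mem_add.1 hx with hx | hx
    · obtain ⟨b, hb, hbx⟩ := hlow x hx
      exact (hmin b hb).trans hbx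
    · exact hmin x hx
  · rintro ⟨a, -, ha, hmin⟩ (h0 | ⟨w, hw, hwb⟩)
    · simp [h0] at ha
    · have := hwb a ha
      have := hmin w (Multiset.mem_add.2 (Or.inl hw))
      omega

lemma filter_multisetPairs_min_mem_snd (A : Finset ℕ) (a n m : ℕ) :
    (multisetPairs A A n m).filter (fun p => a ∈ p.2 ∧ ∀ x ∈ p.1 + p.2, a ≤ x)
      = (multisetPairs (A.filter (a ≤ ·)) (A.filter (a ≤ ·)) n m).filter (a ∈ ·.2) := by
  ext ⟨M, N⟩
  simp only [mem_filter, mem_multisetPairs, IsPairOf, Multiset.mem_add]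
  constructor
  · rintro ⟨⟨h₁, h₂, hs, hc⟩, haN, hmin⟩
    exact ⟨⟨fun x hx => ⟨h₁ x hx, hmin x (Or.inl hx)⟩, fun x hx => ⟨h₂ x hx, hmin x (Or.inr hx)⟩,
      hs, hc⟩, haN⟩
  · rintro ⟨⟨h₁, h₂, hs, hc⟩, haN⟩
    exact ⟨⟨fun x hx => (h₁ x hx).1, fun x hx => (h₂ x hx).1, hs, hc⟩, haN,
      fun x hx => hx.elim (fun hx => (h₁ x hx).2) (fun hx => (h₂ x hx).2)⟩

lemma card_filter_not_separated (A : Finset ℕ) (n m : ℕ) :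
    ((multisetPairs A A n m).filter (¬ Separated ·)).card
      = ∑ a ∈ A, if a ≤ n ∧ 1 ≤ m then
          pairCount (A.filter (a ≤ ·)) (A.filter (a ≤ ·)) (n - a) (m - 1) else 0 := by
  have hbiUnion : (multisetPairs A A n m).filter (¬ Separated ·) = A.biUnion fun a =>
      (multisetPairs A A n m).filter (fun p => a ∈ p.2 ∧ ∀ x ∈ p.1 + p.2, a ≤ x) := by
    ext p
    simp only [mem_filter, mem_biUnion]
    constructor
    · rintro ⟨hp, hsep⟩
      obtain ⟨a, ha, h⟩ := (not_separated_iff hp).1 hsep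
      exact ⟨a, ha, hp, h⟩
    · rintro ⟨a, ha, hp, h⟩
      exact ⟨hp, (not_separated_iff hp).2 ⟨a, ha, h⟩⟩
  rw [hbiUnion, card_biUnion]
  · refine sum_congr rfl fun a ha => ?_
    rw [filter_multisetPairs_min_mem_snd,
      card_filter_mem_snd_multisetPairs (mem_filter.2 ⟨ha, le_rfl⟩)]
  · intro a _ b _ hab
    refine disjoint_filter.2 fun p _ ⟨ha, hamin⟩ ⟨hb, hbmin⟩ => hab ?_
    exact le_antisymm (hamin b (Multiset.mem_add.2 (Or.inr hb)))
      (hbmin a (Multiset.mem_add.2 (Or.inr ha)))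

lemma pairCount_eq_count121_add_sum (A : Finset ℕ) (n m : ℕ) :
    pairCount A A n m = count121 A n m + ∑ a ∈ A, if a ≤ n ∧ 1 ≤ m then
      pairCount (A.filter (a ≤ ·)) (A.filter (a ≤ ·)) (n - a) (m - 1) else 0 := by
  rw [count121_eq_card_filter_separated, ← card_filter_not_separated, pairCount,
    card_filter_add_card_filter_not]

end Avoiders

end POP121

open MvPowerSeries in
theorem stmt0_general (A : Finset ℕ)
    (F : MvPowerSeries (Fin 2) ℚ)
    (hF : ∀ n m : ℕ,
      (MvPowerSeries.coeff (Finsupp.single 0 n + Finsupp.single 1 m)) F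
        = (count121 A n m : ℚ)) :
    (∀ a ∈ A, IsUnit (1 - (X 0 : MvPowerSeries (Fin 2) ℚ) ^ a * X 1)) ∧
    F = (∏ a ∈ A, (1 - (X 0 : MvPowerSeries (Fin 2) ℚ) ^ a * X 1) ^ 2)⁻¹
        - ∑ a ∈ A, (X 0 : MvPowerSeries (Fin 2) ℚ) ^ a * X 1 *
            (∏ b ∈ A.filter (fun b => a ≤ b),
              (1 - (X 0 : MvPowerSeries (Fin 2) ℚ) ^ b * X 1) ^ 2)⁻¹ := by
  refine ⟨fun a _ => POP121.isUnit_one_sub_X_pow_mul_X a, POP121.ext_bidegree fun n m => ?_⟩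
  simp_rw [POP121.inv_prod_sq_eq_ofCoeffs_pairCount, map_sub, map_sum,
    POP121.coeff_X_pow_mul_X_mul, POP121.coeff_ofCoeffs]
  have hFnm : coeff (POP121.bidegree n m) F = count121 A n m := hF n m
  rw [hFnm, POP121.pairCount_eq_count121_add_sum]
  push_cast [apply_ite (Nat.cast (R := ℚ))]
  ring

open MvPowerSeries in
theorem stmt0 (A : Finset ℕ) (hA : A.Nonempty) (hpos : ∀ a ∈ A, 0 < a)
    (F : MvPowerSeries (Fin 2) ℚ)
    (hF : ∀ n m : ℕ,
      (MvPowerSeries.coeff (Finsupp.single 0 n + Finsupp.single 1 m)) F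
        = (count121 A n m : ℚ)) :
    (∀ a ∈ A, IsUnit (1 - (X 0 : MvPowerSeries (Fin 2) ℚ) ^ a * X 1)) ∧
    F = (∏ a ∈ A, (1 - (X 0 : MvPowerSeries (Fin 2) ℚ) ^ a * X 1) ^ 2)⁻¹
        - ∑ a ∈ A, (X 0 : MvPowerSeries (Fin 2) ℚ) ^ a * X 1 *
            (∏ b ∈ A.filter (fun b => a ≤ b),
              (1 - (X 0 : MvPowerSeries (Fin 2) ℚ) ^ b * X 1) ^ 2)⁻¹ :=
  stmt0_general A F hF
end

section
/- Let A be a finite nonempty set of positive integers and let τ be a nonempty consecutive pattern (a word over a partially ordered alphabet forming a single block). Then in ℚ⟦x,y⟧: D_τ^A(x,y) = 1 + C_τ^A(x,y)·( y·Σ_{a∈A} x^a − 1 ). -/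
/-- An occurrence, starting at position `i`, of the consecutive pattern
`p : Fin ℓ → α` (a word of length `ℓ` over a partially ordered alphabet `α`)
in the composition `σ`: a contiguous factor of length `ℓ` whose letters respect
the strict inequalities and the equalities among the letters of the pattern. -/
def OccAt {α : Type*} [PartialOrder α] {ℓ : ℕ} (p : Fin ℓ → α)
    (σ : List ℕ) (i : ℕ) : Prop :=
  i + ℓ ≤ σ.length ∧ ∀ s t : Fin ℓ,
    (p s < p t → σ.getD (i + s) 0 < σ.getD (i + t) 0) ∧
    (p s = p t → σ.getD (i + s) 0 = σ.getD (i + t) 0)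

/-- `σ` avoids the consecutive pattern `p`. -/
def AvoidsPat {α : Type*} [PartialOrder α] {ℓ : ℕ} (p : Fin ℓ → α)
    (σ : List ℕ) : Prop :=
  ∀ i : ℕ, ¬ OccAt p σ i

/-- `σ` quasi-avoids the consecutive pattern `p`: it has exactly one occurrence of
`p`, consisting of the `ℓ` rightmost letters of `σ`. -/
def QuasiAvoidsPat {α : Type*} [PartialOrder α] {ℓ : ℕ} (p : Fin ℓ → α)
    (σ : List ℕ) : Prop :=
  {i : ℕ | OccAt p σ i} = {σ.length - ℓ}


/-!
Removing the last part `a` of a nonempty composition `σ = τ a` can destroy at most one occurrence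
of the pattern, namely one ending at `a`. Hence `τ` avoids the pattern exactly when `σ` avoids or
quasi-avoids it, and these two cases are exclusive. Counting by the last part,
`C + D = 1 + C · y · ∑_{a ∈ A} x^a` coefficientwise, the `1` being the empty composition.
-/

section Patterns

variable {α : Type*} [PartialOrder α] {ℓ : ℕ} (p : Fin ℓ → α)

theorem avoidsPat_nil (hℓ : 0 < ℓ) : AvoidsPat p ([] : List ℕ) := by
  rintro i ⟨hi, -⟩
  simp only [List.length_nil] at hi
  omega

theorem occAt_append_singleton_iff {τ : List ℕ} {a i : ℕ} (h : i + ℓ ≤ τ.length) :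
    OccAt p (τ ++ [a]) i ↔ OccAt p τ i := by
  have hget : ∀ s : Fin ℓ, (τ ++ [a]).getD (i + s) 0 = τ.getD (i + s) 0 :=
    fun s => List.getD_append _ _ _ _ (by omega)
  simp only [OccAt, hget, List.length_append, List.length_singleton]
  exact and_congr_left fun _ => ⟨fun _ => h, fun _ => by omega⟩

theorem avoidsPat_or_quasiAvoidsPat_append_singleton_iff (τ : List ℕ) (a : ℕ) :
    AvoidsPat p (τ ++ [a]) ∨ QuasiAvoidsPat p (τ ++ [a]) ↔ AvoidsPat p τ := by
  have hlen : (τ ++ [a]).length = τ.length + 1 := by simp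
  constructor
  · rintro (hav | hq) i hi
    · exact hav i ((occAt_append_singleton_iff p hi.1).2 hi)
    · have hfinal : i ∈ {j | OccAt p (τ ++ [a]) j} := (occAt_append_singleton_iff p hi.1).2 hi
      rw [hq, Set.mem_singleton_iff] at hfinal
      have := hi.1
      omega
  · intro hτ
    have hfinal : ∀ i, OccAt p (τ ++ [a]) i → i = (τ ++ [a]).length - ℓ := by
      intro i hi
      by_contra hne
      have := hi.1
      exact hτ i ((occAt_append_singleton_iff p (by omega)).1 hi)
    by_cases hocc : OccAt p (τ ++ [a]) ((τ ++ [a]).length - ℓ)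
    · exact .inr (Set.ext fun i => ⟨hfinal i, fun hi => hi ▸ hocc⟩)
    · exact .inl fun i hi => hocc (hfinal i hi ▸ hi)

theorem QuasiAvoidsPat.not_avoidsPat {σ : List ℕ} (h : QuasiAvoidsPat p σ) : ¬ AvoidsPat p σ :=
  fun hav => hav (σ.length - ℓ) (show σ.length - ℓ ∈ {i | OccAt p σ i} from h ▸ rfl)

end Patterns

section Compositions

variable (A : Finset ℕ)

theorem isCompOf_zero_parts_iff {n : ℕ} {σ : List ℕ} : IsCompOf A n 0 σ ↔ σ = [] ∧ n = 0 := by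
  constructor
  · rintro ⟨-, rfl, hlen⟩
    rw [List.length_eq_zero_iff.1 hlen]
    exact ⟨rfl, rfl⟩
  · rintro ⟨rfl, rfl⟩
    exact ⟨by simp, rfl, rfl⟩

theorem isCompOf_append_singleton_iff {n m a : ℕ} {τ : List ℕ} :
    IsCompOf A n (m + 1) (τ ++ [a]) ↔ a ∈ A ∧ a ≤ n ∧ IsCompOf A (n - a) m τ := by
  simp only [IsCompOf, List.mem_append, List.mem_singleton, List.sum_append, List.sum_singleton,
    List.length_append, List.length_singleton, Nat.add_right_cancel_iff]
  grind

theorem setOf_isCompOf_finite (n m : ℕ) : {σ : List ℕ | IsCompOf A n m σ}.Finite := by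
  refine ((Set.Finite.pi fun _ => A.finite_toSet).image fun f : Fin m → ℕ => List.ofFn f).subset ?_
  rintro σ ⟨hmem, -, rfl⟩
  exact ⟨σ.get, fun i _ => hmem _ (σ.get_mem i), List.ofFn_get σ⟩

theorem ncard_isCompOf_or {P Q : List ℕ → Prop} (hPQ : ∀ σ, Q σ → ¬ P σ) (n m : ℕ) :
    {σ | IsCompOf A n m σ ∧ (P σ ∨ Q σ)}.ncard
      = {σ | IsCompOf A n m σ ∧ P σ}.ncard + {σ | IsCompOf A n m σ ∧ Q σ}.ncard := by
  have hunion : {σ | IsCompOf A n m σ ∧ (P σ ∨ Q σ)}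
      = {σ | IsCompOf A n m σ ∧ P σ} ∪ {σ | IsCompOf A n m σ ∧ Q σ} := by
    ext σ
    simp only [Set.mem_ofPred_eq, Set.mem_union, and_or_left]
  exact hunion ▸ Set.ncard_union_eq (Set.disjoint_left.2 fun σ hP hQ => hPQ σ hQ.2 hP.2)
    ((setOf_isCompOf_finite A n m).subset fun σ h => h.1)
    ((setOf_isCompOf_finite A n m).subset fun σ h => h.1)

theorem ncard_isCompOf_zero_parts {P : List ℕ → Prop} (hP : P []) (n : ℕ) :
    {σ | IsCompOf A n 0 σ ∧ P σ}.ncard = if n = 0 then 1 else 0 := by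
  simp only [isCompOf_zero_parts_iff]
  split_ifs with hn
  · convert Set.ncard_singleton ([] : List ℕ)
    ext σ
    simp only [hn, and_true, Set.mem_ofPred_eq, Set.mem_singleton_iff, and_iff_left_iff_imp]
    rintro rfl
    exact hP
  · simp [hn]

theorem ncard_isCompOf_succ_parts (P : List ℕ → Prop) (n m : ℕ) :
    {σ | IsCompOf A n (m + 1) σ ∧ P σ}.ncard
      = ∑ a ∈ A with a ≤ n, {τ | IsCompOf A (n - a) m τ ∧ P (τ ++ [a])}.ncard := by
  have hset : {σ | IsCompOf A n (m + 1) σ ∧ P σ}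
      = ⋃ a ∈ (↑(A.filter (· ≤ n)) : Set ℕ),
          (· ++ [a]) '' {τ | IsCompOf A (n - a) m τ ∧ P (τ ++ [a])} := by
    ext σ
    simp only [Set.mem_ofPred_eq, Set.mem_iUnion, Set.mem_image, Finset.coe_filter, exists_prop]
    constructor
    · rintro ⟨hσ, hP⟩
      obtain rfl | ⟨τ, a, rfl⟩ := σ.eq_nil_or_concat'
      · exact absurd hσ.2.2 (by simp)
      · obtain ⟨ha, han, hτ⟩ := (isCompOf_append_singleton_iff A).1 hσ
        exact ⟨a, ⟨ha, han⟩, τ, ⟨hτ, hP⟩, rfl⟩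
    · rintro ⟨a, ⟨ha, han⟩, τ, ⟨hτ, hP⟩, rfl⟩
      exact ⟨(isCompOf_append_singleton_iff A).2 ⟨ha, han, hτ⟩, hP⟩
  rw [hset, Set.Finite.ncard_biUnion (Finset.finite_toSet _), finsum_mem_coe_finset]
  · exact Finset.sum_congr rfl fun a _ =>
      Set.ncard_image_of_injective _ (List.append_left_injective [a])
  · exact fun a _ => ((setOf_isCompOf_finite A _ m).subset fun τ h => h.1).image _
  · rintro a - b - hab
    refine Set.disjoint_left.2 ?_
    rintro _ ⟨τ, -, rfl⟩ ⟨τ', -, h⟩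
    exact hab (List.singleton_inj.1 (List.append_inj' h rfl).2).symm

end Compositions

section BivariateSeries

open Finsupp MvPowerSeries

theorem Finsupp.eq_single_zero_add_single_one (d : Fin 2 →₀ ℕ) :
    d = single 0 (d 0) + single 1 (d 1) := by
  ext i
  fin_cases i <;> simp

theorem Finsupp.single_zero_add_single_one_le_iff {a b n m : ℕ} :
    single (0 : Fin 2) a + single 1 b ≤ single 0 n + single 1 m ↔ a ≤ n ∧ b ≤ m := by
  simp [Finsupp.le_def, Fin.forall_fin_two]

theorem Finsupp.single_zero_add_single_one_tsub (a b n m : ℕ) :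
    single (0 : Fin 2) n + single 1 m - (single 0 a + single 1 b)
      = single 0 (n - a) + single 1 (m - b) := by
  ext i
  fin_cases i <;> simp

theorem coeff_mul_X_one_mul_X_zero_pow {R : Type*} [CommSemiring R]
    (f : MvPowerSeries (Fin 2) R) (n m a : ℕ) :
    coeff (single 0 n + single 1 m) (f * (X 1 * X 0 ^ a))
      = if a ≤ n ∧ 1 ≤ m then coeff (single 0 (n - a) + single 1 (m - 1)) f else 0 := by
  rw [X_pow_eq, X, monomial_mul_monomial, one_mul, coeff_mul_monomial, add_comm (single 1 1)]
  simp only [single_zero_add_single_one_le_iff, single_zero_add_single_one_tsub, mul_one]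

end BivariateSeries

open MvPowerSeries in
theorem stmt3_general {α : Type*} [PartialOrder α] {ℓ : ℕ} (hℓ : 0 < ℓ) (p : Fin ℓ → α)
    (A : Finset ℕ)
    (C D : MvPowerSeries (Fin 2) ℚ)
    (hC : ∀ n m : ℕ,
      (MvPowerSeries.coeff (R := ℚ) (Finsupp.single (0 : Fin 2) n + Finsupp.single 1 m)) C
        = (Set.ncard {σ : List ℕ | IsCompOf A n m σ ∧ AvoidsPat p σ} : ℚ))
    (hD : ∀ n m : ℕ,
      (MvPowerSeries.coeff (R := ℚ) (Finsupp.single (0 : Fin 2) n + Finsupp.single 1 m)) D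
        = (Set.ncard {σ : List ℕ | IsCompOf A n m σ ∧ QuasiAvoidsPat p σ} : ℚ)) :
    D = 1 + C * ((X 1 : MvPowerSeries (Fin 2) ℚ) * (∑ a ∈ A, (X 0) ^ a) - 1) := by
  suffices h : C + D = 1 + C * (X 1 * ∑ a ∈ A, X 0 ^ a) by
    rw [mul_sub, mul_one, ← add_sub_assoc, ← h, add_sub_cancel_left]
  ext d
  rw [d.eq_single_zero_add_single_one, map_add, hC, hD, ← Nat.cast_add,
    ← ncard_isCompOf_or A (fun σ => QuasiAvoidsPat.not_avoidsPat p), map_add, coeff_one,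
    Finset.mul_sum, Finset.mul_sum, map_sum]
  simp_rw [coeff_mul_X_one_mul_X_zero_pow, hC]
  generalize d 0 = n, d 1 = m
  cases m with
  | zero =>
    rw [ncard_isCompOf_zero_parts A (.inl (avoidsPat_nil p hℓ))]
    simp [Finsupp.single_eq_zero]
  | succ m =>
    simp only [ncard_isCompOf_succ_parts, avoidsPat_or_quasiAvoidsPat_append_singleton_iff,
      Nat.add_sub_cancel, le_add_iff_nonneg_left, zero_le, and_true, Finset.sum_ite,
      Finset.sum_const_zero, add_zero]
    rw [if_neg (by simp), zero_add, Nat.cast_sum]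

open MvPowerSeries in
theorem stmt3 {α : Type*} [PartialOrder α] {ℓ : ℕ} (hℓ : 0 < ℓ) (p : Fin ℓ → α)
    (A : Finset ℕ) (hA : A.Nonempty) (hpos : ∀ a ∈ A, 0 < a)
    (C D : MvPowerSeries (Fin 2) ℚ)
    (hC : ∀ n m : ℕ,
      (MvPowerSeries.coeff (R := ℚ) (Finsupp.single (0 : Fin 2) n + Finsupp.single 1 m)) C
        = (Set.ncard {σ : List ℕ | IsCompOf A n m σ ∧ AvoidsPat p σ} : ℚ))
    (hD : ∀ n m : ℕ,
      (MvPowerSeries.coeff (R := ℚ) (Finsupp.single (0 : Fin 2) n + Finsupp.single 1 m)) D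
        = (Set.ncard {σ : List ℕ | IsCompOf A n m σ ∧ QuasiAvoidsPat p σ} : ℚ)) :
    D = 1 + C * ((X 1 : MvPowerSeries (Fin 2) ℚ) * (∑ a ∈ A, (X 0) ^ a) - 1) :=
  stmt3_general hℓ p A C D hC hD
end

section
/- Let A = {a₁ < ⋯ < a_k} be a finite set of positive integers with k ≥ 2, let A' = A ∖ {a_k}, and let φ = τ-ℓ-ν be a shuffle pattern whose middle letter ℓ is strictly greater than every letter of the nonempty words τ and ν. Then in ℚ⟦x,y⟧: C_φ^A(x,y)·(1 − x^{a_k} y·C_τ^{A'}(x,y))·(1 − x^{a_k} y·C_ν^{A'}(x,y)) = C_φ^{A'}(x,y) − x^{a_k} y·C_τ^{A'}(x,y)·C_ν^{A'}(x,y). -/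
/-- The contiguous factor of `σ` of length `w.length` starting at position `i` is
order-isomorphic to the word `w`. -/
def WordIsoAt (w σ : List ℕ) (i : ℕ) : Prop :=
  i + w.length ≤ σ.length ∧ ∀ s t : ℕ, s < w.length → t < w.length →
    (w.getD s 0 < w.getD t 0 ↔ σ.getD (i + s) 0 < σ.getD (i + t) 0)

/-- `σ` avoids the word `w` (as a consecutive pattern). -/
def AvoidsWord (w σ : List ℕ) : Prop := ∀ i : ℕ, ¬ WordIsoAt w σ i

/-- An occurrence of the shuffle pattern `τ-ℓ-ν` (middle letter greater than all
letters of `τ` and `ν`) in `σ`: a contiguous factor order-isomorphic to `τ`, then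
(strictly later) a single letter strictly greater than every letter of the two
factors, then (strictly later) a contiguous factor order-isomorphic to `ν`. -/
def ShuffleTopOccurs (τ ν σ : List ℕ) : Prop :=
  ∃ i p j : ℕ, WordIsoAt τ σ i ∧ i + τ.length ≤ p ∧ p + 1 ≤ j ∧ WordIsoAt ν σ j ∧
    (∀ s : ℕ, s < τ.length → σ.getD (i + s) 0 < σ.getD p 0) ∧
    (∀ t : ℕ, t < ν.length → σ.getD (j + t) 0 < σ.getD p 0)

/-!
Split a word over `A = A' ∪ {a}`, `a = max A`, at its first letter `a`: `σ = α a β` with `α` a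
word over `A'`. Since `a` exceeds every letter of `α` and no letter of `β` exceeds `a`, an
occurrence of `τ-ℓ-ν` in `σ` lies inside `α`, lies inside `β`, or uses this `a` as `ℓ`, with
its `τ`-factor in `α` and a `ν`-factor in `β` whose letters are all below `a`. With `M = x^a y`, `W` counting
words over `A` without a `ν`-factor below `a`, and `H` counting words over `A'` that avoid
`τ-ℓ-ν` but contain `τ`, this gives
  `C_φ^A = C_φ^{A'} + M C_τ^{A'} C_φ^A + M H W`,  `W = C_ν^{A'} + M C_ν^{A'} W`,
  `C_φ^{A'} = C_τ^{A'} + H`,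
and eliminating `H` and `W` yields the identity.
-/

theorem List.getD_mem {X : Type*} {l : List X} {n : ℕ} {d : X} (h : n < l.length) :
    l.getD n d ∈ l := by
  rw [List.getD_eq_getElem _ _ h]
  exact List.getElem_mem h

theorem List.append_cons_inj_of_notMem_left {X : Type*} {x : X} {l₁ l₂ r₁ r₂ : List X}
    (h₁ : x ∉ l₁) (h₂ : x ∉ l₂) (h : l₁ ++ x :: r₁ = l₂ ++ x :: r₂) : l₁ = l₂ ∧ r₁ = r₂ := by
  induction l₁ generalizing l₂ with
  | nil =>
    cases l₂ with
    | nil => simpa using h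
    | cons y l₂ => simp_all
  | cons y l₁ ih =>
    cases l₂ with
    | nil =>
      simp only [List.cons_append, List.nil_append, List.cons.injEq] at h
      exact absurd (h.1 ▸ List.mem_cons_self) h₁
    | cons z l₂ =>
      simp only [List.cons_append, List.cons.injEq] at h
      obtain ⟨rfl, rfl⟩ := ih (by simp_all) (by simp_all) h.2
      exact ⟨by rw [h.1], rfl⟩

namespace ShufflePattern

open MvPowerSeries Finset.HasAntidiagonal

section GeneratingFunction

variable {S T : Set (List ℕ)} {α β σ : List ℕ} {a : ℕ}

noncomputable def bidegree (σ : List ℕ) : Fin 2 →₀ ℕ :=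
  Finsupp.single 0 σ.sum + Finsupp.single 1 σ.length

noncomputable def wordGF (S : Set (List ℕ)) : MvPowerSeries (Fin 2) ℚ :=
  fun d => ({σ ∈ S | bidegree σ = d}.ncard : ℚ)

lemma coeff_wordGF (d : Fin 2 →₀ ℕ) :
    coeff d (wordGF S) = ({σ ∈ S | bidegree σ = d}.ncard : ℚ) := rfl

lemma bidegree_eq_iff {n m : ℕ} :
    bidegree σ = Finsupp.single 0 n + Finsupp.single 1 m ↔ σ.sum = n ∧ σ.length = m := by
  refine ⟨fun h => ⟨?_, ?_⟩, fun ⟨hn, hm⟩ => by rw [bidegree, hn, hm]⟩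
  · simpa [bidegree] using DFunLike.congr_fun h 0
  · simpa [bidegree] using DFunLike.congr_fun h 1

lemma bidegree_append_cons :
    bidegree (α ++ a :: β) = bidegree [a] + (bidegree α + bidegree β) := by
  ext i
  fin_cases i <;> simp [bidegree] <;> ring

lemma finite_setOf_bidegree_eq (d : Fin 2 →₀ ℕ) : {σ : List ℕ | bidegree σ = d}.Finite := by
  refine ((List.finite_length_eq (Fin (d 0 + 1)) (d 1)).image (List.map Fin.val)).subset ?_
  rintro σ (rfl : bidegree σ = d)
  have hle : ∀ x ∈ σ, x < (bidegree σ) 0 + 1 := fun x hx => by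
    simpa [bidegree, Nat.lt_succ_iff] using List.le_sum_of_mem hx
  exact ⟨σ.pmap (fun x hx => ⟨x, hx⟩) hle, List.length_pmap.trans (by simp [bidegree]),
    by simp [List.map_pmap]⟩

lemma finite_sep_bidegree_eq (S : Set (List ℕ)) (d : Fin 2 →₀ ℕ) :
    {σ ∈ S | bidegree σ = d}.Finite :=
  (finite_setOf_bidegree_eq d).subset fun _ h => h.2

lemma wordGF_union (h : Disjoint S T) : wordGF (S ∪ T) = wordGF S + wordGF T := by
  ext d
  rw [map_add, coeff_wordGF, coeff_wordGF, coeff_wordGF,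
    show {σ ∈ S ∪ T | bidegree σ = d} = _ from Set.sep_union,
    Set.ncard_union_eq (h.mono (Set.sep_subset _ _) (Set.sep_subset _ _))
      (finite_sep_bidegree_eq S d) (finite_sep_bidegree_eq T d), Nat.cast_add]

lemma coeff_wordGF_mul (d : Fin 2 →₀ ℕ) : coeff d (wordGF S * wordGF T) =
    ({p ∈ S ×ˢ T | bidegree p.1 + bidegree p.2 = d}.ncard : ℚ) := by
  classical
  have hsplit : {p ∈ S ×ˢ T | bidegree p.1 + bidegree p.2 = d} =
      ⋃ q ∈ (↑(antidiagonal d) : Set ((Fin 2 →₀ ℕ) × (Fin 2 →₀ ℕ))),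
        {σ ∈ S | bidegree σ = q.1} ×ˢ {σ ∈ T | bidegree σ = q.2} := by
    ext ⟨α, β⟩
    simp only [Set.mem_ofPred_eq, Set.mem_prod, Set.mem_iUnion, Finset.mem_coe,
      mem_antidiagonal, exists_prop, Prod.exists]
    constructor
    · rintro ⟨⟨hα, hβ⟩, hd⟩
      exact ⟨_, _, hd, ⟨hα, rfl⟩, hβ, rfl⟩
    · rintro ⟨_, _, rfl, ⟨hα, rfl⟩, hβ, rfl⟩
      exact ⟨⟨hα, hβ⟩, rfl⟩
  rw [coeff_mul, hsplit, (antidiagonal d).finite_toSet.ncard_biUnion, finsum_mem_coe_finset,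
    Nat.cast_sum]
  · simp only [coeff_wordGF, Set.ncard_prod, Nat.cast_mul]
  · exact fun q _ => (finite_sep_bidegree_eq S q.1).prod (finite_sep_bidegree_eq T q.2)
  · rintro q - q' - hne
    refine Set.disjoint_left.mpr fun p hp hp' => hne ?_
    rw [Prod.ext_iff, ← hp.1.2, ← hp.2.2, ← hp'.1.2, ← hp'.2.2]
    exact ⟨rfl, rfl⟩

lemma wordGF_image2_append_cons (ha : ∀ α ∈ S, a ∉ α) :
    wordGF (Set.image2 (fun α β => α ++ a :: β) S T)
      = monomial (bidegree [a]) 1 * (wordGF S * wordGF T) := by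
  ext d
  rw [coeff_monomial_mul, coeff_wordGF]
  split_ifs with hd
  · obtain ⟨d, rfl⟩ := exists_add_of_le hd
    have himage : {σ ∈ Set.image2 (fun α β => α ++ a :: β) S T | bidegree σ = bidegree [a] + d}
        = (fun p => p.1 ++ a :: p.2) '' {p ∈ S ×ˢ T | bidegree p.1 + bidegree p.2 = d} := by
      ext σ
      simp only [Set.mem_image2, Set.mem_image, Set.mem_ofPred_eq, Set.mem_prod, Prod.exists]
      constructor
      · rintro ⟨⟨α, hα, β, hβ, rfl⟩, hd⟩
        rw [bidegree_append_cons, add_right_inj] at hd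
        exact ⟨α, β, ⟨⟨hα, hβ⟩, hd⟩, rfl⟩
      · rintro ⟨α, β, ⟨⟨hα, hβ⟩, hd⟩, rfl⟩
        exact ⟨⟨α, hα, β, hβ, rfl⟩, by rw [bidegree_append_cons, hd]⟩
    have hinj : Set.InjOn (fun p : List ℕ × List ℕ => p.1 ++ a :: p.2)
        {p ∈ S ×ˢ T | bidegree p.1 + bidegree p.2 = d} := by
      rintro ⟨α₁, β₁⟩ h₁ ⟨α₂, β₂⟩ h₂ h
      exact Prod.ext_iff.mpr (List.append_cons_inj_of_notMem_left (ha _ h₁.1.1) (ha _ h₂.1.1) h)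
    rw [one_mul, add_tsub_cancel_left, coeff_wordGF_mul, himage, hinj.ncard_image]
  · suffices {σ ∈ Set.image2 (fun α β => α ++ a :: β) S T | bidegree σ = d} = ∅ by
      rw [this, Set.ncard_empty, Nat.cast_zero]
    refine Set.eq_empty_of_forall_notMem ?_
    rintro σ ⟨⟨α, -, β, -, rfl⟩, rfl⟩
    exact hd (by rw [bidegree_append_cons]; exact le_self_add)

lemma eq_wordGF_of_coeff {C : MvPowerSeries (Fin 2) ℚ} {A : Finset ℕ} {P : List ℕ → Prop}
    (hC : ∀ n m : ℕ, coeff (Finsupp.single 0 n + Finsupp.single 1 m) C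
      = (Set.ncard {σ : List ℕ | IsCompOf A n m σ ∧ P σ} : ℚ)) :
    C = wordGF {σ | (∀ x ∈ σ, x ∈ A) ∧ P σ} := by
  ext d
  have hd : d = Finsupp.single 0 (d 0) + Finsupp.single 1 (d 1) := by
    ext i; fin_cases i <;> simp
  rw [hd, hC, coeff_wordGF]
  congr 2
  ext σ
  simp only [IsCompOf, Set.mem_ofPred_eq, bidegree_eq_iff]
  tauto

lemma X_pow_mul_X_eq_monomial (a : ℕ) :
    (X 0 : MvPowerSeries (Fin 2) ℚ) ^ a * X 1 = monomial (bidegree [a]) 1 := by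
  rw [X_pow_eq, X, monomial_mul_monomial, one_mul, bidegree]
  simp

end GeneratingFunction

section Occurrence

def WordIsoBelowAt (b : ℕ) (w σ : List ℕ) (i : ℕ) : Prop :=
  WordIsoAt w σ i ∧ ∀ t < w.length, σ.getD (i + t) 0 < b

def AvoidsWordBelow (b : ℕ) (w σ : List ℕ) : Prop := ∀ i, ¬ WordIsoBelowAt b w σ i

variable {w τ ν α β σ σ' : List ℕ} {b c i j : ℕ}

lemma wordIsoBelowAt_congr (hlen : i + w.length ≤ σ.length ↔ j + w.length ≤ σ'.length)
    (h : ∀ s < w.length, σ.getD (i + s) 0 = σ'.getD (j + s) 0) :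
    WordIsoBelowAt c w σ i ↔ WordIsoBelowAt c w σ' j := by
  simp only [WordIsoBelowAt, WordIsoAt, hlen]
  constructor
  · rintro ⟨⟨hl, hiso⟩, hlt⟩
    exact ⟨⟨hl, fun s t hs ht => by rw [← h s hs, ← h t ht]; exact hiso s t hs ht⟩,
      fun t ht => h t ht ▸ hlt t ht⟩
  · rintro ⟨⟨hl, hiso⟩, hlt⟩
    exact ⟨⟨hl, fun s t hs ht => by rw [h s hs, h t ht]; exact hiso s t hs ht⟩,
      fun t ht => (h t ht).symm ▸ hlt t ht⟩

lemma wordIsoBelowAt_append_of_le (h : i + w.length ≤ α.length) :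
    WordIsoBelowAt c w (α ++ β) i ↔ WordIsoBelowAt c w α i :=
  wordIsoBelowAt_congr (by simp only [List.length_append]; omega)
    fun s hs => List.getD_append _ _ _ _ (by omega)

lemma wordIsoBelowAt_append_length_add :
    WordIsoBelowAt c w (α ++ β) (α.length + j) ↔ WordIsoBelowAt c w β j :=
  wordIsoBelowAt_congr (by simp only [List.length_append]; omega)
    fun s _ => by rw [List.getD_append_right _ _ _ _ (by omega)]; congr 1; omega

lemma WordIsoBelowAt.append_right (h : WordIsoBelowAt c w α i) (β : List ℕ) :
    WordIsoBelowAt c w (α ++ β) i :=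
  (wordIsoBelowAt_append_of_le h.1.1).mpr h

lemma WordIsoBelowAt.mono (h : WordIsoBelowAt c w σ i) (hcb : c ≤ b) :
    WordIsoBelowAt b w σ i :=
  ⟨h.1, fun t ht => (h.2 t ht).trans_le hcb⟩

lemma wordIsoBelowAt_iff_of_forall_lt (hσ : ∀ x ∈ σ, x < b) :
    WordIsoBelowAt b w σ i ↔ WordIsoAt w σ i :=
  ⟨And.left, fun h => ⟨h, fun t ht => hσ _ (List.getD_mem (by have := h.1; omega))⟩⟩

lemma wordIsoBelowAt_append_cons_right :
    WordIsoBelowAt c w (α ++ b :: β) (α.length + 1 + j) ↔ WordIsoBelowAt c w β j := by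
  simpa using
    wordIsoBelowAt_append_length_add (c := c) (w := w) (α := α ++ [b]) (β := β) (j := j)

lemma wordIsoBelowAt_append_cons (hcb : c ≤ b) :
    WordIsoBelowAt c w (α ++ b :: β) i ↔
      WordIsoBelowAt c w α i ∨ ∃ j, i = α.length + 1 + j ∧ WordIsoBelowAt c w β j := by
  refine ⟨fun h => ?_, ?_⟩
  · rcases le_or_gt (i + w.length) α.length with hi | hi
    · exact Or.inl ((wordIsoBelowAt_append_of_le hi).mp h)
    rcases le_or_gt (α.length + 1) i with hi' | hi'
    · obtain ⟨j, rfl⟩ := Nat.exists_eq_add_of_le hi'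
      exact Or.inr ⟨j, rfl, wordIsoBelowAt_append_cons_right.mp h⟩
    · -- the factor would contain the letter `b` itself
      have hb := h.2 (α.length - i) (by omega)
      rw [show i + (α.length - i) = α.length by omega,
        List.getD_append_right _ _ _ _ le_rfl, Nat.sub_self] at hb
      exact absurd hcb (not_le.mpr hb)
  · rintro (h | ⟨j, rfl, h⟩)
    · exact h.append_right _
    · exact wordIsoBelowAt_append_cons_right.mpr h

lemma avoidsWordBelow_append_cons :
    AvoidsWordBelow b w (α ++ b :: β) ↔ AvoidsWordBelow b w α ∧ AvoidsWordBelow b w β := by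
  simp only [AvoidsWordBelow, wordIsoBelowAt_append_cons le_rfl]
  constructor
  · intro h
    exact ⟨fun i hi => h i (Or.inl hi), fun j hj => h _ (Or.inr ⟨j, rfl, hj⟩)⟩
  · rintro ⟨hα, hβ⟩ i (hi | ⟨j, -, hj⟩)
    exacts [hα i hi, hβ j hj]

lemma avoidsWordBelow_iff_of_forall_lt (hσ : ∀ x ∈ σ, x < b) :
    AvoidsWordBelow b w σ ↔ AvoidsWord w σ := by
  simp only [AvoidsWordBelow, AvoidsWord, wordIsoBelowAt_iff_of_forall_lt hσ]

lemma shuffleTopOccurs_iff : ShuffleTopOccurs τ ν σ ↔ ∃ i p j, i + τ.length ≤ p ∧ p < j ∧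
    WordIsoBelowAt (σ.getD p 0) τ σ i ∧ WordIsoBelowAt (σ.getD p 0) ν σ j := by
  simp only [ShuffleTopOccurs, WordIsoBelowAt, Nat.succ_le_iff]
  constructor
  · rintro ⟨i, p, j, hτ, hip, hpj, hν, hτp, hνp⟩
    exact ⟨i, p, j, hip, hpj, ⟨hτ, hτp⟩, hν, hνp⟩
  · rintro ⟨i, p, j, hip, hpj, ⟨hτ, hτp⟩, hν, hνp⟩
    exact ⟨i, p, j, hτ, hip, hpj, hν, hτp, hνp⟩

lemma ShuffleTopOccurs.append_right (h : ShuffleTopOccurs τ ν α) (β : List ℕ) :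
    ShuffleTopOccurs τ ν (α ++ β) := by
  obtain ⟨i, p, j, hip, hpj, hτ, hν⟩ := shuffleTopOccurs_iff.mp h
  have hp : p < α.length := by have := hν.1.1; omega
  refine shuffleTopOccurs_iff.mpr ⟨i, p, j, hip, hpj, ?_, ?_⟩ <;>
    rw [List.getD_append _ _ _ _ hp]
  exacts [hτ.append_right β, hν.append_right β]

lemma ShuffleTopOccurs.append_left (α : List ℕ) (h : ShuffleTopOccurs τ ν β) :
    ShuffleTopOccurs τ ν (α ++ β) := by
  obtain ⟨i, p, j, hip, hpj, hτ, hν⟩ := shuffleTopOccurs_iff.mp h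
  have hp : (α ++ β).getD (α.length + p) 0 = β.getD p 0 := by
    rw [List.getD_append_right _ _ _ _ (by omega), Nat.add_sub_cancel_left]
  refine shuffleTopOccurs_iff.mpr ⟨α.length + i, α.length + p, α.length + j, by omega, by omega,
    ?_, ?_⟩ <;> rw [hp, wordIsoBelowAt_append_length_add]
  exacts [hτ, hν]

lemma AvoidsWord.not_shuffleTopOccurs (h : AvoidsWord τ σ) : ¬ ShuffleTopOccurs τ ν σ :=
  fun ⟨i, _, _, hτ, _⟩ => h i hτ

lemma ShuffleTopOccurs.not_avoidsWordBelow (h : ShuffleTopOccurs τ ν σ) (hσ : ∀ x ∈ σ, x ≤ b) :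
    ¬ AvoidsWordBelow b ν σ := by
  obtain ⟨-, p, j, -, hpj, -, hν⟩ := shuffleTopOccurs_iff.mp h
  exact fun hav => hav j (hν.mono (hσ _ (List.getD_mem (by have := hν.1.1; omega))))

lemma getD_append_cons_length_add_one_add (p : ℕ) :
    (α ++ b :: β).getD (α.length + 1 + p) 0 = β.getD p 0 := by
  rw [List.getD_append_right _ _ _ _ (by omega), show α.length + 1 + p - α.length = p + 1 by omega]
  rfl

lemma shuffleTopOccurs_append_cons_iff (hα : ∀ x ∈ α, x < b) (hβ : ∀ x ∈ β, x ≤ b) :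
    ShuffleTopOccurs τ ν (α ++ b :: β) ↔ ShuffleTopOccurs τ ν α ∨ ShuffleTopOccurs τ ν β ∨
      (¬ AvoidsWord τ α ∧ ¬ AvoidsWordBelow b ν β) := by
  constructor
  · intro h
    obtain ⟨i, p, j, hip, hpj, hτ, hν⟩ := shuffleTopOccurs_iff.mp h
    have hpb : (α ++ b :: β).getD p 0 ≤ b := by
      have hmem := List.getD_mem (d := 0) (show p < (α ++ b :: β).length by have := hν.1.1; omega)
      simp only [List.mem_append, List.mem_cons] at hmem
      rcases hmem with hx | hx | hx
      exacts [(hα _ hx).le, hx.le, hβ _ hx]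
    rcases (wordIsoBelowAt_append_cons hpb).mp hν with hνα | ⟨j, rfl, hνβ⟩
    · have hp : p < α.length := by have := hνα.1.1; omega
      rw [List.getD_append _ _ _ _ hp] at hτ hνα
      exact Or.inl (shuffleTopOccurs_iff.mpr
        ⟨i, p, j, hip, hpj, (wordIsoBelowAt_append_of_le (by omega)).mp hτ, hνα⟩)
    rcases (wordIsoBelowAt_append_cons hpb).mp hτ with hτα | ⟨i, rfl, hτβ⟩
    · exact Or.inr (Or.inr ⟨fun hav => hav i hτα.1, fun hav => hav j (hνβ.mono hpb)⟩)
    · obtain ⟨p, rfl⟩ : ∃ p', p = α.length + 1 + p' := ⟨p - (α.length + 1), by omega⟩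
      rw [getD_append_cons_length_add_one_add] at hτβ hνβ
      exact Or.inr (Or.inl (shuffleTopOccurs_iff.mpr ⟨i, p, j, by omega, by omega, hτβ, hνβ⟩))
  · rintro (h | h | ⟨hτ, hν⟩)
    · exact ShuffleTopOccurs.append_right h _
    · exact ShuffleTopOccurs.append_left α (ShuffleTopOccurs.append_left [b] h)
    · simp only [AvoidsWord, AvoidsWordBelow, not_forall, not_not] at hτ hν
      obtain ⟨i, hτ⟩ := hτ
      obtain ⟨j, hν⟩ := hν
      have hb : (α ++ b :: β).getD α.length 0 = b := by simp
      refine shuffleTopOccurs_iff.mpr ⟨i, α.length, α.length + 1 + j, hτ.1, by omega, ?_, ?_⟩ <;>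
        rw [hb]
      · exact ((wordIsoBelowAt_iff_of_forall_lt hα).mpr hτ).append_right _
      · exact wordIsoBelowAt_append_cons_right.mpr hν

lemma not_shuffleTopOccurs_append_cons_iff (hα : ∀ x ∈ α, x < b) (hβ : ∀ x ∈ β, x ≤ b) :
    ¬ ShuffleTopOccurs τ ν (α ++ b :: β) ↔
      (AvoidsWord τ α ∧ ¬ ShuffleTopOccurs τ ν β) ∨
      (¬ ShuffleTopOccurs τ ν α ∧ ¬ AvoidsWord τ α ∧ AvoidsWordBelow b ν β) := by
  have hτ : AvoidsWord τ α → ¬ ShuffleTopOccurs τ ν α := AvoidsWord.not_shuffleTopOccurs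
  have hν : ShuffleTopOccurs τ ν β → ¬ AvoidsWordBelow b ν β :=
    fun h => ShuffleTopOccurs.not_avoidsWordBelow h hβ
  rw [shuffleTopOccurs_append_cons_iff hα hβ]
  tauto

end Occurrence

section Decomposition

variable {B : Finset ℕ} {a : ℕ} {τ ν : List ℕ}

lemma disjoint_image2_append_cons {S S' T T' : Set (List ℕ)} (h : Disjoint S S')
    (hS : ∀ α ∈ S, a ∉ α) (hS' : ∀ α ∈ S', a ∉ α) :
    Disjoint (Set.image2 (fun α β => α ++ a :: β) S T)
      (Set.image2 (fun α β => α ++ a :: β) S' T') := by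
  refine Set.disjoint_left.mpr ?_
  rintro _ ⟨α, hα, β, -, rfl⟩ ⟨α', hα', β', -, heq⟩
  obtain ⟨rfl, -⟩ := List.append_cons_inj_of_notMem_left (hS' _ hα') (hS _ hα) heq
  exact Set.disjoint_left.mp h hα hα'

lemma wordGF_forall_mem_insert (ha : a ∉ B) (P : List ℕ → Prop) :
    wordGF {σ | (∀ x ∈ σ, x ∈ insert a B) ∧ P σ} = wordGF {σ | (∀ x ∈ σ, x ∈ B) ∧ P σ} +
      wordGF {σ ∈ Set.image2 (fun α β => α ++ a :: β)
        {α | ∀ x ∈ α, x ∈ B} {β | ∀ x ∈ β, x ∈ insert a B} | P σ} := by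
  rw [← wordGF_union]
  · congr 1
    ext σ
    simp only [Set.mem_union, Set.mem_ofPred_eq, Set.mem_image2]
    constructor
    · rintro ⟨hσ, hP⟩
      by_cases haσ : a ∈ σ
      · obtain ⟨α, β, haα, rfl, -⟩ := List.exists_erase_eq haσ
        refine Or.inr ⟨⟨α, fun x hx => ?_, β, fun x hx => hσ x (by simp [hx]), rfl⟩, hP⟩
        exact (Finset.mem_insert.mp (hσ x (by simp [hx]))).resolve_left
          (by rintro rfl; exact haα hx)
      · refine Or.inl ⟨fun x hx => ?_, hP⟩
        exact (Finset.mem_insert.mp (hσ x hx)).resolve_left (by rintro rfl; exact haσ hx)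
    · rintro (⟨hσ, hP⟩ | ⟨⟨α, hα, β, hβ, rfl⟩, hP⟩)
      · exact ⟨fun x hx => Finset.mem_insert_of_mem (hσ x hx), hP⟩
      · refine ⟨fun x hx => ?_, hP⟩
        simp only [List.mem_append, List.mem_cons] at hx
        rcases hx with hx | rfl | hx
        exacts [Finset.mem_insert_of_mem (hα x hx), Finset.mem_insert_self x B, hβ x hx]
  · refine Set.disjoint_left.mpr ?_
    rintro _ ⟨hσ, -⟩ ⟨⟨α, -, β, -, rfl⟩, -⟩
    exact ha (hσ a (by simp))

lemma wordGF_not_shuffleTopOccurs_eq_add (B : Finset ℕ) :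
    wordGF {σ | (∀ x ∈ σ, x ∈ B) ∧ ¬ ShuffleTopOccurs τ ν σ} =
      wordGF {σ | (∀ x ∈ σ, x ∈ B) ∧ AvoidsWord τ σ} +
      wordGF {σ | (∀ x ∈ σ, x ∈ B) ∧ ¬ ShuffleTopOccurs τ ν σ ∧ ¬ AvoidsWord τ σ} := by
  rw [← wordGF_union]
  · congr 1
    ext σ
    have hτ : AvoidsWord τ σ → ¬ ShuffleTopOccurs τ ν σ := AvoidsWord.not_shuffleTopOccurs
    simp only [Set.mem_union, Set.mem_ofPred_eq]
    tauto
  · exact Set.disjoint_left.mpr fun σ h h' => h'.2.2 h.2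

lemma notMem_of_forall_lt (hB : ∀ x ∈ B, x < a) {P : List ℕ → Prop} :
    ∀ α ∈ {σ | (∀ x ∈ σ, x ∈ B) ∧ P σ}, a ∉ α :=
  fun _ hα h => lt_irrefl a (hB a (hα.1 a h))

lemma wordGF_avoidsWordBelow_insert (hB : ∀ x ∈ B, x < a) :
    wordGF {σ | (∀ x ∈ σ, x ∈ insert a B) ∧ AvoidsWordBelow a ν σ} =
      wordGF {σ | (∀ x ∈ σ, x ∈ B) ∧ AvoidsWord ν σ} +
      monomial (bidegree [a]) 1 * (wordGF {σ | (∀ x ∈ σ, x ∈ B) ∧ AvoidsWord ν σ} *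
        wordGF {σ | (∀ x ∈ σ, x ∈ insert a B) ∧ AvoidsWordBelow a ν σ}) := by
  conv_lhs => rw [wordGF_forall_mem_insert (fun h => lt_irrefl a (hB a h))]
  rw [← wordGF_image2_append_cons (notMem_of_forall_lt hB)]
  congr 2 <;> ext σ
  · exact and_congr_right fun hσ => avoidsWordBelow_iff_of_forall_lt fun x hx => hB x (hσ x hx)
  · simp only [Set.mem_ofPred_eq, Set.mem_image2]
    constructor
    · rintro ⟨⟨α, hα, β, hβ, rfl⟩, hav⟩
      rw [avoidsWordBelow_append_cons,
        avoidsWordBelow_iff_of_forall_lt fun x hx => hB x (hα x hx)] at hav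
      exact ⟨α, ⟨hα, hav.1⟩, β, ⟨hβ, hav.2⟩, rfl⟩
    · rintro ⟨α, ⟨hα, hαν⟩, β, ⟨hβ, hβν⟩, rfl⟩
      refine ⟨⟨α, hα, β, hβ, rfl⟩, avoidsWordBelow_append_cons.mpr ⟨?_, hβν⟩⟩
      exact (avoidsWordBelow_iff_of_forall_lt fun x hx => hB x (hα x hx)).mpr hαν

lemma wordGF_not_shuffleTopOccurs_insert (hB : ∀ x ∈ B, x < a) :
    wordGF {σ | (∀ x ∈ σ, x ∈ insert a B) ∧ ¬ ShuffleTopOccurs τ ν σ} =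
      wordGF {σ | (∀ x ∈ σ, x ∈ B) ∧ ¬ ShuffleTopOccurs τ ν σ} +
      monomial (bidegree [a]) 1 * (wordGF {σ | (∀ x ∈ σ, x ∈ B) ∧ AvoidsWord τ σ} *
        wordGF {σ | (∀ x ∈ σ, x ∈ insert a B) ∧ ¬ ShuffleTopOccurs τ ν σ}) +
      monomial (bidegree [a]) 1 *
        (wordGF {σ | (∀ x ∈ σ, x ∈ B) ∧ ¬ ShuffleTopOccurs τ ν σ ∧ ¬ AvoidsWord τ σ} *
        wordGF {σ | (∀ x ∈ σ, x ∈ insert a B) ∧ AvoidsWordBelow a ν σ}) := by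
  conv_lhs => rw [wordGF_forall_mem_insert (fun h => lt_irrefl a (hB a h))]
  rw [add_assoc,
    ← wordGF_image2_append_cons (notMem_of_forall_lt hB),
    ← wordGF_image2_append_cons (notMem_of_forall_lt hB), ← wordGF_union
      (disjoint_image2_append_cons (Set.disjoint_left.mpr fun σ h h' => h'.2.2 h.2)
        (notMem_of_forall_lt hB) (notMem_of_forall_lt hB))]
  congr 2
  ext σ
  simp only [Set.mem_ofPred_eq, Set.mem_image2, Set.mem_union]
  have hlt {α : List ℕ} (hα : ∀ x ∈ α, x ∈ B) : ∀ x ∈ α, x < a := fun x hx => hB x (hα x hx)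
  have hle {β : List ℕ} (hβ : ∀ x ∈ β, x ∈ insert a B) : ∀ x ∈ β, x ≤ a := fun x hx =>
    (Finset.mem_insert.mp (hβ x hx)).elim le_of_eq fun h => (hB x h).le
  constructor
  · rintro ⟨⟨α, hα, β, hβ, rfl⟩, hφ⟩
    rcases (not_shuffleTopOccurs_append_cons_iff (hlt hα) (hle hβ)).mp hφ with h | h
    · exact Or.inl ⟨α, ⟨hα, h.1⟩, β, ⟨hβ, h.2⟩, rfl⟩
    · exact Or.inr ⟨α, ⟨hα, h.1, h.2.1⟩, β, ⟨hβ, h.2.2⟩, rfl⟩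
  · rintro (⟨α, ⟨hα, hτ⟩, β, ⟨hβ, hφ⟩, rfl⟩ | ⟨α, ⟨hα, hφ, hτ⟩, β, ⟨hβ, hν⟩, rfl⟩)
    · exact ⟨⟨α, hα, β, hβ, rfl⟩,
        (not_shuffleTopOccurs_append_cons_iff (hlt hα) (hle hβ)).mpr (Or.inl ⟨hτ, hφ⟩)⟩
    · exact ⟨⟨α, hα, β, hβ, rfl⟩,
        (not_shuffleTopOccurs_append_cons_iff (hlt hα) (hle hβ)).mpr (Or.inr ⟨hφ, hτ, hν⟩)⟩

end Decomposition

end ShufflePattern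

open ShufflePattern

open MvPowerSeries in
theorem stmt5_general (τ ν : List ℕ)
    (A : Finset ℕ)
    (hA : A.Nonempty) (ak : ℕ) (hak : ak = A.max' hA) (A' : Finset ℕ)
    (hA' : A' = A.erase ak)
    (Cφ Cφ' Cτ' Cν' : MvPowerSeries (Fin 2) ℚ)
    (hCφ : ∀ n m : ℕ,
      (MvPowerSeries.coeff (Finsupp.single 0 n + Finsupp.single 1 m)) Cφ
        = (Set.ncard {σ : List ℕ | IsCompOf A n m σ ∧ ¬ ShuffleTopOccurs τ ν σ} : ℚ))
    (hCφ' : ∀ n m : ℕ,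
      (MvPowerSeries.coeff (Finsupp.single 0 n + Finsupp.single 1 m)) Cφ'
        = (Set.ncard {σ : List ℕ | IsCompOf A' n m σ ∧ ¬ ShuffleTopOccurs τ ν σ} : ℚ))
    (hCτ' : ∀ n m : ℕ,
      (MvPowerSeries.coeff (Finsupp.single 0 n + Finsupp.single 1 m)) Cτ'
        = (Set.ncard {σ : List ℕ | IsCompOf A' n m σ ∧ AvoidsWord τ σ} : ℚ))
    (hCν' : ∀ n m : ℕ,
      (MvPowerSeries.coeff (Finsupp.single 0 n + Finsupp.single 1 m)) Cν'
        = (Set.ncard {σ : List ℕ | IsCompOf A' n m σ ∧ AvoidsWord ν σ} : ℚ)) :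
    Cφ * (1 - (X 0 : MvPowerSeries (Fin 2) ℚ) ^ ak * X 1 * Cτ')
        * (1 - (X 0 : MvPowerSeries (Fin 2) ℚ) ^ ak * X 1 * Cν')
      = Cφ' - (X 0 : MvPowerSeries (Fin 2) ℚ) ^ ak * X 1 * Cτ' * Cν' := by
  have hlt : ∀ x ∈ A', x < ak := by
    subst hak hA'
    exact fun x hx => A.lt_max'_of_mem_erase_max' hA hx
  have hA_eq : A = insert ak A' := by rw [hA', Finset.insert_erase (hak ▸ A.max'_mem hA)]
  rw [hA_eq] at hCφ
  rw [eq_wordGF_of_coeff hCφ, eq_wordGF_of_coeff hCφ', eq_wordGF_of_coeff hCτ',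
    eq_wordGF_of_coeff hCν', X_pow_mul_X_eq_monomial]
  have hφ := wordGF_not_shuffleTopOccurs_insert (τ := τ) (ν := ν) hlt
  have hW := wordGF_avoidsWordBelow_insert (ν := ν) hlt
  have hφ' := wordGF_not_shuffleTopOccurs_eq_add (τ := τ) (ν := ν) A'
  set M : MvPowerSeries (Fin 2) ℚ := monomial (bidegree [ak]) 1
  set Fν := wordGF {σ | (∀ x ∈ σ, x ∈ A') ∧ AvoidsWord ν σ}
  set H := wordGF {σ | (∀ x ∈ σ, x ∈ A') ∧ ¬ ShuffleTopOccurs τ ν σ ∧ ¬ AvoidsWord τ σ}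
  linear_combination (1 - M * Fν) * hφ + M * H * hW - M * Fν * hφ'

open MvPowerSeries in
theorem stmt5 (τ ν : List ℕ) (hτ : τ ≠ []) (hν : ν ≠ [])
    (hτpos : ∀ x ∈ τ, 0 < x) (hνpos : ∀ x ∈ ν, 0 < x)
    (A : Finset ℕ) (hcard : 2 ≤ A.card) (hpos : ∀ a ∈ A, 0 < a)
    (hA : A.Nonempty) (ak : ℕ) (hak : ak = A.max' hA) (A' : Finset ℕ)
    (hA' : A' = A.erase ak)
    (Cφ Cφ' Cτ' Cν' : MvPowerSeries (Fin 2) ℚ)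
    (hCφ : ∀ n m : ℕ,
      (MvPowerSeries.coeff (Finsupp.single 0 n + Finsupp.single 1 m)) Cφ
        = (Set.ncard {σ : List ℕ | IsCompOf A n m σ ∧ ¬ ShuffleTopOccurs τ ν σ} : ℚ))
    (hCφ' : ∀ n m : ℕ,
      (MvPowerSeries.coeff (Finsupp.single 0 n + Finsupp.single 1 m)) Cφ'
        = (Set.ncard {σ : List ℕ | IsCompOf A' n m σ ∧ ¬ ShuffleTopOccurs τ ν σ} : ℚ))
    (hCτ' : ∀ n m : ℕ,
      (MvPowerSeries.coeff (Finsupp.single 0 n + Finsupp.single 1 m)) Cτ'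
        = (Set.ncard {σ : List ℕ | IsCompOf A' n m σ ∧ AvoidsWord τ σ} : ℚ))
    (hCν' : ∀ n m : ℕ,
      (MvPowerSeries.coeff (Finsupp.single 0 n + Finsupp.single 1 m)) Cν'
        = (Set.ncard {σ : List ℕ | IsCompOf A' n m σ ∧ AvoidsWord ν σ} : ℚ)) :
    Cφ * (1 - (X 0 : MvPowerSeries (Fin 2) ℚ) ^ ak * X 1 * Cτ')
        * (1 - (X 0 : MvPowerSeries (Fin 2) ℚ) ^ ak * X 1 * Cν')
      = Cφ' - (X 0 : MvPowerSeries (Fin 2) ℚ) ^ ak * X 1 * Cτ' * Cν' :=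
  stmt5_general τ ν A hA ak hak A' hA' Cφ Cφ' Cτ' Cν' hCφ hCφ' hCτ' hCν'
end

section
/- Let τ and ν be nonempty words over the positive integers and let f₁, f₂ ∈ {R, I} be trivial bijections. Then the shuffle pattern τ-ℓ-ν is equivalent to the shuffle pattern f₁(τ)-ℓ-f₂(ν), and the shuffle pattern τ-1-ν is equivalent to the shuffle pattern f₁(τ)-1-f₂(ν); that is, for every finite set A of positive integers and all n, m ≥ 0 the corresponding avoiding sets in C_{n;m}^A have equal cardinalities. -/
/-- An occurrence of the shuffle pattern `τ-1-ν` (middle letter smaller than all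
letters of `τ` and `ν`) in `σ`. -/
def ShuffleBotOccurs (τ ν σ : List ℕ) : Prop :=
  ∃ i p j : ℕ, WordIsoAt τ σ i ∧ i + τ.length ≤ p ∧ p + 1 ≤ j ∧ WordIsoAt ν σ j ∧
    (∀ s : ℕ, s < τ.length → σ.getD p 0 < σ.getD (i + s) 0) ∧
    (∀ t : ℕ, t < ν.length → σ.getD p 0 < σ.getD (j + t) 0)

/-
Let `x` be the largest letter of a word `σ` and cut `σ` at the occurrences of `x` into blocks
`b₀ x b₁ x ⋯ x b_k`. As `x` exceeds every other letter, `σ` avoids `τ-ℓ-ν` iff every block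
avoids it and no block after the first one containing a factor order-isomorphic to `τ` contains
a factor order-isomorphic to `ν`. Transform the blocks before that first one by `f₁`, the blocks
after it by `f₂`, and that block itself by a bijection between the `τ`-containing avoiders over the
smaller alphabet; such a bijection exists by induction on the alphabet, because there the avoiders
of `τ-ℓ-ν` and of `f₁(τ)-ℓ-f₂(ν)` are equinumerous, and so are the avoiders of `τ` and of `f₁(τ)`.
All maps keep the multiset of letters, so counting multiset by multiset proves the claim for
compositions with any alphabet, weight and number of parts. The pattern `τ-1-ν` is `τ-ℓ-ν` for
the reversed order on `ℕ`.
-/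

theorem List.infix_or_infix_of_infix_append_cons {β : Type*} {u l r : List β} {x : β}
    (h : u <:+: l ++ x :: r) (hx : x ∉ u) : u <:+: l ∨ u <:+: r := by
  rcases List.infix_append_iff.mp h with h | h | ⟨l₁, l₂, rfl, h₁, h₂⟩
  · exact Or.inl h
  · rcases List.infix_cons_iff.mp h with h | h
    · rcases List.prefix_cons_iff.mp h with rfl | ⟨t, rfl, -⟩
      · exact Or.inl List.nil_infix
      · exact absurd List.mem_cons_self hx
    · exact Or.inr h
  · rcases List.prefix_cons_iff.mp h₂ with rfl | ⟨t, rfl, -⟩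
    · exact Or.inl (by simpa using h₁.isInfix)
    · exact absurd (by simp) hx

theorem List.mem_of_mem_intercalate_singleton {β : Type*} {x y : β} :
    ∀ {bs : List (List β)}, y ∈ [x].intercalate bs → y = x ∨ ∃ c ∈ bs, y ∈ c
  | [], h => by simp at h
  | [b], h => Or.inr ⟨b, by simp, by simpa using h⟩
  | b :: c :: cs, h => by
    rw [List.intercalate_cons_cons] at h
    simp only [List.mem_append, List.mem_singleton] at h
    rcases h with (h | rfl) | h
    · exact Or.inr ⟨b, by simp, h⟩
    · exact Or.inl rfl
    · rcases List.mem_of_mem_intercalate_singleton h with h | ⟨d, hd, hyd⟩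
      · exact Or.inl h
      · exact Or.inr ⟨d, List.mem_cons_of_mem _ hd, hyd⟩

theorem List.Forall₂.intercalate_perm {β : Type*} (x : β) :
    ∀ {bs cs : List (List β)}, List.Forall₂ List.Perm bs cs →
      ([x].intercalate bs).Perm ([x].intercalate cs)
  | [], [], _ => .refl _
  | [_], [_], .cons h _ => by simpa using h
  | _ :: _ :: _, _ :: _ :: _, .cons h₁ (.cons h₂ h) => by
    simp only [List.intercalate_cons_cons]
    exact (h₁.append_right _).append (List.Forall₂.intercalate_perm x (.cons h₂ h))

theorem List.subset_and_not_mem_of_mem_splitOn {β : Type*} [BEq β] [LawfulBEq β] {x : β} :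
    ∀ {σ c : List β}, c ∈ σ.splitOn x → c ⊆ σ ∧ x ∉ c
  | [], c, h => by simp_all
  | a :: σ, c, h => by
    rw [List.splitOn_cons_eq_if_modifyHead] at h
    split_ifs at h with hax
    · rcases List.mem_cons.mp h with rfl | h
      · simp
      · exact (List.subset_and_not_mem_of_mem_splitOn h).imp
          (fun hs _ hy => List.mem_cons_of_mem _ (hs hy)) id
    · obtain ⟨d, ds, hds⟩ := List.exists_cons_of_ne_nil (List.splitOn_ne_nil x σ)
      rw [hds] at h
      rcases List.mem_cons.mp h with rfl | h
      · have hd := List.subset_and_not_mem_of_mem_splitOn (hds ▸ List.mem_cons_self)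
        refine ⟨List.cons_subset_cons _ hd.1, ?_⟩
        simp only [List.mem_cons, not_or]
        exact ⟨fun h => hax (by simp [h]), hd.2⟩
      · exact (List.subset_and_not_mem_of_mem_splitOn (hds ▸ List.mem_cons_of_mem _ h)).imp
          (fun hs _ hy => List.mem_cons_of_mem _ (hs hy)) id

theorem List.Forall₂.forall_mem_of_perm {β : Type*} {P : β → Prop} {bs cs : List (List β)}
    (h : List.Forall₂ List.Perm cs bs) (hbs : ∀ b ∈ bs, ∀ y ∈ b, P y) :
    ∀ c ∈ cs, ∀ y ∈ c, P y := by
  induction h with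
  | nil => simp
  | cons hcb _ ih =>
    simp only [List.mem_cons, forall_eq_or_imp] at hbs ⊢
    exact ⟨fun y hy => hbs.1 y (hcb.mem_iff.mp hy), ih hbs.2⟩

theorem finite_setOf_coe_eq {β : Type*} (s : Multiset β) :
    {σ : List β | (σ : Multiset β) = s}.Finite :=
  s.lists.finite_toSet.subset fun σ hσ => by
    simpa [Multiset.mem_lists_iff] using hσ.symm

theorem exists_equiv_coe_eq_of_ncard_eq {β : Type*} {S T : Set (List β)}
    (h : ∀ s : Multiset β,
      {σ ∈ S | (σ : Multiset β) = s}.ncard = {σ ∈ T | (σ : Multiset β) = s}.ncard) :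
    ∃ e : S ≃ T, ∀ σ, ((e σ : List β) : Multiset β) = σ := by
  have fiber (s : Multiset β) :
      Nonempty ({σ : S // ((σ : List β) : Multiset β) = s} ≃
        {σ : T // ((σ : List β) : Multiset β) = s}) := by
    have e₁ := Equiv.subtypeSubtypeEquivSubtypeInter (· ∈ S) fun σ : List β => (σ : Multiset β) = s
    have e₂ := Equiv.subtypeSubtypeEquivSubtypeInter (· ∈ T) fun σ : List β => (σ : Multiset β) = s
    have : Finite {σ // σ ∈ S ∧ (σ : Multiset β) = s} :=
      ((finite_setOf_coe_eq s).subset fun σ hσ => hσ.2).to_subtype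
    have : Finite {σ // σ ∈ T ∧ (σ : Multiset β) = s} :=
      ((finite_setOf_coe_eq s).subset fun σ hσ => hσ.2).to_subtype
    have : Finite {σ : S // ((σ : List β) : Multiset β) = s} := Finite.of_equiv _ e₁.symm
    have : Finite {σ : T // ((σ : List β) : Multiset β) = s} := Finite.of_equiv _ e₂.symm
    refine Finite.card_eq.mp ?_
    rw [Nat.card_congr e₁, Nat.card_congr e₂]
    exact h s
  let F s := (fiber s).some
  refine ⟨(Equiv.sigmaFiberEquiv _).symm.trans
    ((Equiv.sigmaCongrRight F).trans (Equiv.sigmaFiberEquiv _)), fun σ => ?_⟩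
  simpa [Equiv.sigmaFiberEquiv] using (F _ ⟨σ, rfl⟩).2

theorem exists_invOn_of_equiv {β : Type*} {S T : Set (List β)} (e : S ≃ T)
    (he : ∀ σ, ((e σ : List β) : Multiset β) = σ) :
    ∃ g g' : List β → List β, Set.InvOn g' g S T ∧ Set.MapsTo g S T ∧ Set.MapsTo g' T S ∧
      (∀ σ, (g σ).Perm σ) ∧ ∀ σ, (g' σ).Perm σ := by
  classical
  have he' (σ : T) : ((e.symm σ : List β) : Multiset β) = σ := by
    simpa using (he (e.symm σ)).symm
  refine ⟨fun σ => if h : σ ∈ S then e ⟨σ, h⟩ else σ,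
    fun σ => if h : σ ∈ T then e.symm ⟨σ, h⟩ else σ,
    ⟨fun σ hσ => by simp [hσ], fun σ hσ => by simp [hσ]⟩, fun σ hσ => by simp [hσ],
    fun σ hσ => by simp [hσ], fun σ => ?_, fun σ => ?_⟩
  · by_cases h : σ ∈ S
    · simpa [h] using Multiset.coe_eq_coe.mp (he ⟨σ, h⟩)
    · simp [h]
  · by_cases h : σ ∈ T
    · simpa [h] using Multiset.coe_eq_coe.mp (he' ⟨σ, h⟩)
    · simp [h]

variable {α : Type*} [LinearOrder α]

def OrderIsomorphic (w u : List α) : Prop :=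
  w.length = u.length ∧ ∀ p ∈ w.zip u, ∀ q ∈ w.zip u, (p.1 < q.1 ↔ p.2 < q.2)

def ContainsFactor (w σ : List α) : Prop :=
  ∃ u, u <:+: σ ∧ OrderIsomorphic w u

def ContainsFactorBelow (w : List α) (x : α) (σ : List α) : Prop :=
  ∃ u, u <:+: σ ∧ OrderIsomorphic w u ∧ ∀ y ∈ u, y < x

def ContainsShuffle (τ ν σ : List α) : Prop :=
  ∃ L x R, σ = L ++ x :: R ∧ ContainsFactorBelow τ x L ∧ ContainsFactorBelow ν x R

theorem OrderIsomorphic.reverse {w u : List α} (h : OrderIsomorphic w u) :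
    OrderIsomorphic w.reverse u.reverse := by
  obtain ⟨hlen, hlt⟩ := h
  have hzip : w.reverse.zip u.reverse = (w.zip u).reverse := by
    simp only [List.zip, ← List.reverse_zipWith hlen]
  refine ⟨by simpa using hlen, ?_⟩
  simp only [hzip, List.mem_reverse]
  exact hlt

theorem orderIsomorphic_reverse_iff {w u : List α} :
    OrderIsomorphic w.reverse u.reverse ↔ OrderIsomorphic w u :=
  ⟨fun h => by simpa using h.reverse, OrderIsomorphic.reverse⟩

theorem orderIsomorphic_map_toDual_iff {w u : List α} :
    OrderIsomorphic (w.map OrderDual.toDual) (u.map OrderDual.toDual) ↔ OrderIsomorphic w u := by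
  simp only [OrderIsomorphic, List.length_map, List.zip_map, List.mem_map, Prod.map,
    forall_exists_index, and_imp]
  refine and_congr_right fun _ => ⟨fun h p hp q hq => ?_, fun h _ p hp hpeq _ q hq hqeq => ?_⟩
  · simpa using h _ q hq rfl _ p hp rfl
  · subst hpeq hqeq
    simpa using h q hq p hp

theorem containsFactor_reverse_iff {w σ : List α} :
    ContainsFactor w.reverse σ.reverse ↔ ContainsFactor w σ := by
  constructor
  · rintro ⟨u, hu, hiso⟩
    exact ⟨u.reverse, by simpa using List.reverse_infix.mpr hu,
      orderIsomorphic_reverse_iff.mp (by simpa using hiso)⟩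
  · rintro ⟨u, hu, hiso⟩
    exact ⟨u.reverse, List.reverse_infix.mpr hu, hiso.reverse⟩

section Factor

variable {w σ l r : List α} {x y : α}

theorem ContainsFactorBelow.mono (h : ContainsFactorBelow w y l) (hyx : y ≤ x)
    (hl : l <:+: σ) : ContainsFactorBelow w x σ :=
  let ⟨u, hu, hiso, hlt⟩ := h
  ⟨u, hu.trans hl, hiso, fun z hz => (hlt z hz).trans_le hyx⟩

theorem ContainsFactorBelow.containsFactor (h : ContainsFactorBelow w x σ) :
    ContainsFactor w σ :=
  let ⟨u, hu, hiso, _⟩ := h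
  ⟨u, hu, hiso⟩

theorem containsFactorBelow_iff_containsFactor (h : ∀ y ∈ σ, y < x) :
    ContainsFactorBelow w x σ ↔ ContainsFactor w σ :=
  ⟨ContainsFactorBelow.containsFactor, fun ⟨u, hu, hiso⟩ =>
    ⟨u, hu, hiso, fun y hy => h y (hu.subset hy)⟩⟩

theorem containsFactorBelow_append_cons (hyx : y ≤ x) :
    ContainsFactorBelow w y (l ++ x :: r) ↔
      ContainsFactorBelow w y l ∨ ContainsFactorBelow w y r := by
  constructor
  · rintro ⟨u, hu, hiso, hlt⟩
    have hx : x ∉ u := fun hx => (hlt x hx).not_ge hyx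
    exact (List.infix_or_infix_of_infix_append_cons hu hx).imp
      (fun h => ⟨u, h, hiso, hlt⟩) (fun h => ⟨u, h, hiso, hlt⟩)
  · rintro (h | h)
    · exact h.mono le_rfl List.infix_append_left
    · exact h.mono le_rfl ⟨l ++ [x], [], by simp⟩

end Factor

theorem containsShuffle_append_cons {τ ν l r : List α} {x : α} (h : ∀ y ∈ l ++ r, y ≤ x) :
    ContainsShuffle τ ν (l ++ x :: r) ↔ ContainsShuffle τ ν l ∨
      (ContainsFactorBelow τ x l ∧ ContainsFactorBelow ν x r) ∨ ContainsShuffle τ ν r := by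
  constructor
  · rintro ⟨L, y, R, hσ, hτ, hν⟩
    rcases List.append_eq_append_iff.mp hσ with
      ⟨_ | ⟨a, as⟩, rfl, hr⟩ | ⟨_ | ⟨b, bs⟩, rfl, hR⟩
    · obtain ⟨rfl, rfl⟩ : x = y ∧ r = R := by simpa using hr
      exact Or.inr (Or.inl ⟨by simpa using hτ, hν⟩)
    · obtain ⟨rfl, rfl⟩ : x = a ∧ r = as ++ y :: R := by simpa using hr
      have hyx : y ≤ x := h y (by simp)
      rcases (containsFactorBelow_append_cons hyx).mp hτ with hτl | hτr
      · exact .inr (.inl ⟨hτl.mono hyx List.infix_rfl, hν.mono hyx ⟨as ++ [y], [], by simp⟩⟩)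
      · exact Or.inr (Or.inr ⟨as, y, R, rfl, hτr, hν⟩)
    · obtain ⟨rfl, rfl⟩ : y = x ∧ R = r := by simpa using hR
      exact Or.inr (Or.inl ⟨by simpa using hτ, hν⟩)
    · obtain ⟨rfl, rfl⟩ : y = b ∧ R = bs ++ x :: r := by simpa using hR
      have hyx : y ≤ x := h y (by simp)
      rcases (containsFactorBelow_append_cons hyx).mp hν with hνl | hνr
      · exact Or.inl ⟨L, y, bs, rfl, hτ, hνl⟩
      · exact Or.inr (Or.inl ⟨hτ.mono hyx List.infix_append_left, hνr.mono hyx List.infix_rfl⟩)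
  · rintro (⟨L, y, R, rfl, hτ, hν⟩ | ⟨hτ, hν⟩ | ⟨L, y, R, rfl, hτ, hν⟩)
    · exact ⟨L, y, R ++ x :: r, by simp, hτ, hν.mono le_rfl List.infix_append_left⟩
    · exact ⟨l, x, r, rfl, hτ, hν⟩
    · exact ⟨l ++ x :: L, y, R, by simp, hτ.mono le_rfl ⟨l ++ [x], [], by simp⟩, hν⟩

theorem not_containsShuffle_nil {τ ν : List α} : ¬ ContainsShuffle τ ν [] := by
  rintro ⟨L, x, R, h, -⟩
  simp at h

theorem containsFactorBelow_intercalate {w : List α} {x : α} (b : List α) (bs : List (List α)) :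
    ContainsFactorBelow w x ([x].intercalate (b :: bs)) ↔
      ∃ c ∈ b :: bs, ContainsFactorBelow w x c := by
  induction bs generalizing b with
  | nil => simp
  | cons c cs ih =>
    rw [List.intercalate_cons_cons, List.append_assoc, List.singleton_append,
      containsFactorBelow_append_cons le_rfl, ih]
    simp

theorem containsShuffle_intercalate_cons {τ ν b : List α} {bs : List (List α)} {x : α}
    (h : ∀ c ∈ b :: bs, ∀ y ∈ c, y < x) :
    ContainsShuffle τ ν ([x].intercalate (b :: bs)) ↔ ContainsShuffle τ ν b ∨
      (ContainsFactor τ b ∧ ∃ c ∈ bs, ContainsFactor ν c) ∨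
      ContainsShuffle τ ν ([x].intercalate bs) := by
  cases bs with
  | nil => simp [not_containsShuffle_nil]
  | cons c cs =>
    have hle : ∀ y ∈ b ++ [x].intercalate (c :: cs), y ≤ x := by
      intro y hy
      rcases List.mem_append.mp hy with hy | hy
      · exact (h b List.mem_cons_self y hy).le
      · rcases List.mem_of_mem_intercalate_singleton hy with rfl | ⟨d, hd, hyd⟩
        · exact le_rfl
        · exact (h d (List.mem_cons_of_mem _ hd) y hyd).le
    rw [List.intercalate_cons_cons, List.append_assoc, List.singleton_append,
      containsShuffle_append_cons hle, containsFactorBelow_intercalate,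
      containsFactorBelow_iff_containsFactor (h b List.mem_cons_self)]
    have hν : (∃ d ∈ c :: cs, ContainsFactorBelow ν x d) ↔ ∃ d ∈ c :: cs, ContainsFactor ν d :=
      exists_congr fun d => and_congr_right fun hd =>
        containsFactorBelow_iff_containsFactor (h d (List.mem_cons_of_mem _ hd))
    rw [hν]

structure IsFactorSymmetry (τ τ' : List α) (t : List α → List α) : Prop where
  involutive : Function.Involutive t
  perm : ∀ σ, (t σ).Perm σ
  containsFactor_iff : ∀ σ, ContainsFactor τ' (t σ) ↔ ContainsFactor τ σ

theorem IsFactorSymmetry.symm {τ τ' : List α} {t : List α → List α}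
    (h : IsFactorSymmetry τ τ' t) : IsFactorSymmetry τ' τ t where
  involutive := h.involutive
  perm := h.perm
  containsFactor_iff σ := by rw [← h.containsFactor_iff, h.involutive]

theorem ContainsShuffle.containsFactor_left {τ ν σ : List α} (h : ContainsShuffle τ ν σ) :
    ContainsFactor τ σ :=
  let ⟨_, _, _, hσ, hτ, _⟩ := h
  (hτ.mono le_rfl (hσ ▸ List.infix_append_left)).containsFactor

theorem ContainsShuffle.containsFactor_right {τ ν σ : List α} (h : ContainsShuffle τ ν σ) :
    ContainsFactor ν σ :=
  let ⟨L, x, _, hσ, _, hν⟩ := h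
  (hν.mono le_rfl (hσ ▸ ⟨L ++ [x], [], by simp⟩)).containsFactor

theorem not_containsShuffle_intercalate {τ ν : List α} {x : α} :
    ∀ {bs : List (List α)}, (∀ c ∈ bs, ∀ y ∈ c, y < x) → (∀ c ∈ bs, ¬ ContainsFactor ν c) →
      ¬ ContainsShuffle τ ν ([x].intercalate bs)
  | [], _, _ => not_containsShuffle_nil
  | b :: bs, hlt, hν => by
    rw [containsShuffle_intercalate_cons hlt]
    rintro (h | ⟨-, c, hc, hνc⟩ | h)
    · exact hν b List.mem_cons_self h.containsFactor_right
    · exact hν c (List.mem_cons_of_mem _ hc) hνc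
    · exact not_containsShuffle_intercalate (fun c hc => hlt c (List.mem_cons_of_mem _ hc))
        (fun c hc => hν c (List.mem_cons_of_mem _ hc)) h

def containingAvoiders (B : Set α) (τ ν : List α) : Set (List α) :=
  {b | (∀ y ∈ b, y ∈ B) ∧ ¬ ContainsShuffle τ ν b ∧ ContainsFactor τ b}

open Classical in
noncomputable def blockMap (τ : List α) (t g u : List α → List α) :
    List (List α) → List (List α)
  | [] => []
  | b :: bs => if ContainsFactor τ b then g b :: bs.map u else t b :: blockMap τ t g u bs

section BlockMap

variable {τ ν τ' ν' : List α} {t g g' u : List α → List α}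

theorem blockMap_forall₂_perm (ht : ∀ σ, (t σ).Perm σ) (hg : ∀ σ, (g σ).Perm σ)
    (hu : ∀ σ, (u σ).Perm σ) :
    ∀ bs : List (List α), List.Forall₂ List.Perm (blockMap τ t g u bs) bs
  | [] => .nil
  | b :: bs => by
    rw [blockMap]
    split_ifs
    · exact .cons (hg b) (List.forall₂_map_left_iff.mpr (List.forall₂_same.mpr fun c _ => hu c))
    · exact .cons (ht b) (blockMap_forall₂_perm ht hg hu bs)

variable {B : Set α} {x : α}

theorem not_containsShuffle_blockMap (ht : IsFactorSymmetry τ τ' t)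
    (hu : IsFactorSymmetry ν ν' u) (hB : ∀ y ∈ B, y < x) (hgp : ∀ σ, (g σ).Perm σ)
    (hg : Set.MapsTo g (containingAvoiders B τ ν) (containingAvoiders B τ' ν')) :
    ∀ bs : List (List α), (∀ c ∈ bs, ∀ y ∈ c, y ∈ B) →
      ¬ ContainsShuffle τ ν ([x].intercalate bs) →
      ¬ ContainsShuffle τ' ν' ([x].intercalate (blockMap τ t g u bs))
  | [], _, _ => not_containsShuffle_nil
  | b :: bs, hbs, hav => by
    have hlt : ∀ c ∈ b :: bs, ∀ y ∈ c, y < x := fun c hc y hy => hB y (hbs c hc y hy)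
    have hlt' :=
      (blockMap_forall₂_perm (τ := τ) ht.perm hgp hu.perm (b :: bs)).forall_mem_of_perm hlt
    rw [containsShuffle_intercalate_cons hlt] at hav
    push Not at hav
    obtain ⟨havb, havmid, havbs⟩ := hav
    rw [blockMap] at hlt' ⊢
    split_ifs at hlt' ⊢ with hτb
    · obtain ⟨-, hgb, -⟩ := hg ⟨hbs b List.mem_cons_self, havb, hτb⟩
      have hνu : ∀ c ∈ bs.map u, ¬ ContainsFactor ν' c := by
        simpa only [List.forall_mem_map, hu.containsFactor_iff] using havmid hτb
      rw [containsShuffle_intercalate_cons hlt']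
      rintro (h | ⟨-, c, hc, hνc⟩ | h)
      · exact hgb h
      · exact hνu c hc hνc
      · exact not_containsShuffle_intercalate
          (fun c hc => hlt' c (List.mem_cons_of_mem _ hc)) hνu h
    · have hτtb : ¬ ContainsFactor τ' (t b) := (ht.containsFactor_iff b).not.mpr hτb
      rw [containsShuffle_intercalate_cons hlt']
      rintro (h | ⟨h, -⟩ | h)
      · exact hτtb h.containsFactor_left
      · exact hτtb h
      · exact not_containsShuffle_blockMap ht hu hB hgp hg bs
          (fun c hc => hbs c (List.mem_cons_of_mem _ hc)) havbs h

theorem blockMap_blockMap (ht : IsFactorSymmetry τ τ' t) (hu : IsFactorSymmetry ν ν' u)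
    (hB : ∀ y ∈ B, y < x)
    (hg : Set.MapsTo g (containingAvoiders B τ ν) (containingAvoiders B τ' ν'))
    (hg' : Set.LeftInvOn g' g (containingAvoiders B τ ν)) :
    ∀ bs : List (List α), (∀ c ∈ bs, ∀ y ∈ c, y ∈ B) →
      ¬ ContainsShuffle τ ν ([x].intercalate bs) →
      blockMap τ' t g' u (blockMap τ t g u bs) = bs
  | [], _, _ => rfl
  | b :: bs, hbs, hav => by
    have hlt : ∀ c ∈ b :: bs, ∀ y ∈ c, y < x := fun c hc y hy => hB y (hbs c hc y hy)
    rw [containsShuffle_intercalate_cons hlt] at hav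
    push Not at hav
    obtain ⟨havb, -, havbs⟩ := hav
    rw [blockMap]
    split_ifs with hτb
    · have hb : b ∈ containingAvoiders B τ ν := ⟨hbs b List.mem_cons_self, havb, hτb⟩
      rw [blockMap, if_pos (hg hb).2.2, hg' hb, List.map_map, hu.involutive.comp_self,
        List.map_id]
    · rw [blockMap, if_neg ((ht.containsFactor_iff b).not.mpr hτb), ht.involutive,
        blockMap_blockMap ht hu hB hg hg' bs (fun c hc => hbs c (List.mem_cons_of_mem _ hc))
          havbs]

end BlockMap

noncomputable def wordMap (x : α) (τ : List α) (t g u : List α → List α) (σ : List α) :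
    List α :=
  [x].intercalate (blockMap τ t g u (σ.splitOn x))

section WordMap

variable {τ ν τ' ν' : List α} {t g g' u : List α → List α} {B : Set α} {x : α}

theorem wordMap_spec (ht : IsFactorSymmetry τ τ' t) (hu : IsFactorSymmetry ν ν' u)
    (hB : ∀ y ∈ B, y < x) (hgp : ∀ σ, (g σ).Perm σ)
    (hg : Set.MapsTo g (containingAvoiders B τ ν) (containingAvoiders B τ' ν'))
    (hg' : Set.LeftInvOn g' g (containingAvoiders B τ ν)) {σ : List α}
    (hσ : ∀ y ∈ σ, y ∈ insert x B) (hav : ¬ ContainsShuffle τ ν σ) :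
    (wordMap x τ t g u σ).Perm σ ∧ ¬ ContainsShuffle τ' ν' (wordMap x τ t g u σ) ∧
      wordMap x τ' t g' u (wordMap x τ t g u σ) = σ := by
  have hσbs : [x].intercalate (σ.splitOn x) = σ := List.intercalate_splitOn x
  have hbs : ∀ c ∈ σ.splitOn x, ∀ y ∈ c, y ∈ B := fun c hc y hy => by
    obtain ⟨hcσ, hxc⟩ := List.subset_and_not_mem_of_mem_splitOn hc
    exact (hσ y (hcσ hy)).resolve_left (by rintro rfl; exact hxc hy)
  have hperm := blockMap_forall₂_perm (τ := τ) ht.perm hgp hu.perm (σ.splitOn x)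
  refine ⟨(hperm.intercalate_perm x).trans (by rw [hσbs]),
    not_containsShuffle_blockMap ht hu hB hgp hg _ hbs (by rwa [hσbs]), ?_⟩
  have hx : ∀ c ∈ blockMap τ t g u (σ.splitOn x), x ∉ c := fun c hc hxc =>
    (hB x (hperm.forall_mem_of_perm hbs c hc x hxc)).false
  have hne : blockMap τ t g u (σ.splitOn x) ≠ [] := by
    rw [← List.length_pos_iff, hperm.length_eq, List.length_pos_iff]
    exact List.splitOn_ne_nil x σ
  rw [wordMap, wordMap, List.splitOn_intercalate x hx hne,
    blockMap_blockMap ht hu hB hg hg' _ hbs (by rwa [hσbs]), hσbs]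

end WordMap

section Counting

variable {τ ν τ' ν' : List α} {t u : List α → List α}

theorem IsFactorSymmetry.ncard_fiber_eq (ht : IsFactorSymmetry τ τ' t) (s : Multiset α) :
    {σ | ¬ ContainsFactor τ σ ∧ (σ : Multiset α) = s}.ncard =
      {σ | ¬ ContainsFactor τ' σ ∧ (σ : Multiset α) = s}.ncard := by
  have hmaps (τ τ' : List α) (ht : IsFactorSymmetry τ τ' t) :
      Set.MapsTo t {σ | ¬ ContainsFactor τ σ ∧ (σ : Multiset α) = s}
        {σ | ¬ ContainsFactor τ' σ ∧ (σ : Multiset α) = s} := fun σ ⟨hσ, hs⟩ =>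
    ⟨(ht.containsFactor_iff σ).not.mpr hσ, hs ▸ Multiset.coe_eq_coe.mpr (ht.perm σ)⟩
  exact Set.BijOn.ncard_eq <| Set.InvOn.bijOn
    ⟨fun σ _ => ht.involutive σ, fun σ _ => ht.involutive σ⟩ (hmaps τ τ' ht) (hmaps τ' τ ht.symm)

theorem ncard_fiber_containingAvoiders {B : Set α} {s : Multiset α} (hs : ∀ y ∈ s, y ∈ B) :
    {σ ∈ containingAvoiders B τ ν | (σ : Multiset α) = s}.ncard =
      {σ | ¬ ContainsShuffle τ ν σ ∧ (σ : Multiset α) = s}.ncard -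
        {σ | ¬ ContainsFactor τ σ ∧ (σ : Multiset α) = s}.ncard := by
  have hdiff : {σ ∈ containingAvoiders B τ ν | (σ : Multiset α) = s} =
      {σ | ¬ ContainsShuffle τ ν σ ∧ (σ : Multiset α) = s} \
        {σ | ¬ ContainsFactor τ σ ∧ (σ : Multiset α) = s} := by
    ext σ
    simp only [containingAvoiders, Set.mem_ofPred_eq, Set.mem_sdiff]
    constructor
    · rintro ⟨⟨-, hav, hτ⟩, hσ⟩
      exact ⟨⟨hav, hσ⟩, fun h => h.1 hτ⟩
    · rintro ⟨⟨hav, hσ⟩, hτ⟩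
      exact ⟨⟨fun y hy => hs y (hσ ▸ Multiset.mem_coe.mpr hy), hav, by tauto⟩, hσ⟩
  have hsub : {σ | ¬ ContainsFactor τ σ ∧ (σ : Multiset α) = s} ⊆
      {σ | ¬ ContainsShuffle τ ν σ ∧ (σ : Multiset α) = s} :=
    fun σ hσ => ⟨mt ContainsShuffle.containsFactor_left hσ.1, hσ.2⟩
  rw [hdiff, Set.ncard_sdiff hsub ((finite_setOf_coe_eq s).subset fun σ hσ => hσ.2)]

theorem ncard_fiber_containingAvoiders_eq (ht : IsFactorSymmetry τ τ' t) {B : Set α}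
    (h : ∀ s : Multiset α, (∀ y ∈ s, y ∈ B) →
      {σ | ¬ ContainsShuffle τ ν σ ∧ (σ : Multiset α) = s}.ncard =
        {σ | ¬ ContainsShuffle τ' ν' σ ∧ (σ : Multiset α) = s}.ncard)
    (s : Multiset α) :
    {σ ∈ containingAvoiders B τ ν | (σ : Multiset α) = s}.ncard =
      {σ ∈ containingAvoiders B τ' ν' | (σ : Multiset α) = s}.ncard := by
  by_cases hs : ∀ y ∈ s, y ∈ B
  · rw [ncard_fiber_containingAvoiders hs, ncard_fiber_containingAvoiders hs, h s hs,
      ht.ncard_fiber_eq]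
  · have hempty (τ ν : List α) :
        {σ ∈ containingAvoiders B τ ν | (σ : Multiset α) = s} = ∅ := by
      ext σ
      simp only [Set.mem_ofPred_eq, Set.mem_empty_iff_false, iff_false]
      rintro ⟨⟨hσB, -⟩, rfl⟩
      exact hs fun y hy => hσB y (Multiset.mem_coe.mp hy)
    rw [hempty, hempty]

theorem ncard_fiber_eq_of_wordMap (ht : IsFactorSymmetry τ τ' t) (hu : IsFactorSymmetry ν ν' u)
    {B : Set α} {x : α} (hB : ∀ y ∈ B, y < x) {g g' : List α → List α}
    (hinv : Set.InvOn g' g (containingAvoiders B τ ν) (containingAvoiders B τ' ν'))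
    (hg : Set.MapsTo g (containingAvoiders B τ ν) (containingAvoiders B τ' ν'))
    (hg' : Set.MapsTo g' (containingAvoiders B τ' ν') (containingAvoiders B τ ν))
    (hgp : ∀ σ, (g σ).Perm σ) (hg'p : ∀ σ, (g' σ).Perm σ)
    {s : Multiset α} (hs : ∀ y ∈ s, y ∈ insert x B) :
    {σ | ¬ ContainsShuffle τ ν σ ∧ (σ : Multiset α) = s}.ncard =
      {σ | ¬ ContainsShuffle τ' ν' σ ∧ (σ : Multiset α) = s}.ncard := by
  have hσ {σ : List α} (h : (σ : Multiset α) = s) : ∀ y ∈ σ, y ∈ insert x B :=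
    fun y hy => hs y (h ▸ Multiset.mem_coe.mpr hy)
  have spec := fun {σ} (h : σ ∈ {σ | ¬ ContainsShuffle τ ν σ ∧ (σ : Multiset α) = s}) =>
    wordMap_spec ht hu hB hgp hg hinv.1 (hσ h.2) h.1
  have spec' := fun {σ} (h : σ ∈ {σ | ¬ ContainsShuffle τ' ν' σ ∧ (σ : Multiset α) = s}) =>
    wordMap_spec ht.symm hu.symm hB hg'p hg' hinv.2 (hσ h.2) h.1
  refine Set.BijOn.ncard_eq (f := wordMap x τ t g u) <| Set.InvOn.bijOn
    (f' := wordMap x τ' t g' u) ⟨fun σ h => (spec h).2.2, fun σ h => (spec' h).2.2⟩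
    (fun σ h => ⟨(spec h).2.1, h.2 ▸ Multiset.coe_eq_coe.mpr (spec h).1⟩)
    (fun σ h => ⟨(spec' h).2.1, h.2 ▸ Multiset.coe_eq_coe.mpr (spec' h).1⟩)

theorem ncard_fiber_avoiders_eq (ht : IsFactorSymmetry τ τ' t) (hu : IsFactorSymmetry ν ν' u)
    (s : Multiset α) :
    {σ | ¬ ContainsShuffle τ ν σ ∧ (σ : Multiset α) = s}.ncard =
      {σ | ¬ ContainsShuffle τ' ν' σ ∧ (σ : Multiset α) = s}.ncard := by
  suffices h : ∀ A : Finset α, ∀ s : Multiset α, (∀ y ∈ s, y ∈ A) →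
      {σ | ¬ ContainsShuffle τ ν σ ∧ (σ : Multiset α) = s}.ncard =
        {σ | ¬ ContainsShuffle τ' ν' σ ∧ (σ : Multiset α) = s}.ncard from
    h s.toFinset s fun y hy => Multiset.mem_toFinset.mpr hy
  intro A
  induction A using Finset.induction_on_max with
  | empty =>
    intro s hs
    have hs0 : s = 0 := Multiset.eq_zero_of_forall_notMem fun y hy => by simpa using hs y hy
    have hall (τ ν : List α) :
        {σ | ¬ ContainsShuffle τ ν σ ∧ (σ : Multiset α) = s} =
          {σ : List α | (σ : Multiset α) = s} := by
      ext σ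
      refine ⟨And.right, fun hσ => ⟨?_, hσ⟩⟩
      obtain rfl : σ = [] := (Multiset.coe_eq_zero σ).mp (hσ.trans hs0)
      exact not_containsShuffle_nil
    rw [hall, hall]
  | insert x A hA ih =>
    obtain ⟨e, he⟩ := exists_equiv_coe_eq_of_ncard_eq
      (ncard_fiber_containingAvoiders_eq (B := A) ht fun s hs => ih s hs)
    obtain ⟨g, g', hinv, hg, hg', hgp, hg'p⟩ := exists_invOn_of_equiv e he
    intro s hs
    exact ncard_fiber_eq_of_wordMap ht hu hA hinv hg hg' hgp hg'p (by simpa using hs)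

end Counting

theorem orderIsomorphic_iff_getD (d : α) {w u : List α} :
    OrderIsomorphic w u ↔ w.length = u.length ∧ ∀ s t, s < w.length → t < w.length →
      (w.getD s d < w.getD t d ↔ u.getD s d < u.getD t d) := by
  refine and_congr_right fun hlen => ?_
  simp only [List.forall_mem_iff_getElem, List.getElem_zip, List.length_zip, ← hlen, min_self]
  constructor
  · intro h s t hs ht
    simpa [List.getD_eq_getElem?_getD, hs, ht, hlen ▸ hs, hlen ▸ ht] using h s hs t ht
  · intro h s hs t ht
    simpa [List.getD_eq_getElem?_getD, hs, ht, hlen ▸ hs, hlen ▸ ht] using h s t hs ht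

def IsOrderIsoAt (d : α) (w σ : List α) (i : ℕ) : Prop :=
  i + w.length ≤ σ.length ∧ ∀ s t : ℕ, s < w.length → t < w.length →
    (w.getD s d < w.getD t d ↔ σ.getD (i + s) d < σ.getD (i + t) d)

theorem isOrderIsoAt_iff (d : α) {w σ : List α} {i : ℕ} :
    IsOrderIsoAt d w σ i ↔
      i + w.length ≤ σ.length ∧ OrderIsomorphic w ((σ.drop i).take w.length) := by
  rw [orderIsomorphic_iff_getD d]
  refine ⟨fun ⟨hle, h⟩ => ⟨hle, by simp; omega, fun s t hs ht => ?_⟩,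
    fun ⟨hle, _, h⟩ => ⟨hle, fun s t hs ht => ?_⟩⟩
  · simpa [List.getD_eq_getElem?_getD, hs, ht] using h s t hs ht
  · simpa [List.getD_eq_getElem?_getD, hs, ht] using h s t hs ht

theorem forall_mem_take_drop_iff {β : Type*} (d : β) {P : β → Prop} {σ : List β} {i n : ℕ}
    (h : i + n ≤ σ.length) :
    (∀ y ∈ (σ.drop i).take n, P y) ↔ ∀ s < n, P (σ.getD (i + s) d) := by
  simp only [List.forall_mem_iff_getElem, List.length_take, List.length_drop]
  constructor
  · intro H s hs
    simpa [List.getD_eq_getElem?_getD, hs, show i + s < σ.length by omega] using H s (by omega)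
  · intro H s hs
    simpa [List.getD_eq_getElem?_getD, show i + s < σ.length by omega] using H s (by omega)

theorem containsFactorBelow_iff_exists_segment {w l : List α} {x : α} :
    ContainsFactorBelow w x l ↔ ∃ i, i + w.length ≤ l.length ∧
      OrderIsomorphic w ((l.drop i).take w.length) ∧ ∀ y ∈ (l.drop i).take w.length, y < x := by
  constructor
  · rintro ⟨u, ⟨a, b, rfl⟩, hiso, hlt⟩
    rw [hiso.1]
    exact ⟨a.length, by simp, by simpa [hiso.1] using hiso, by simpa using hlt⟩
  · rintro ⟨i, -, hiso, hlt⟩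
    exact ⟨_, (List.take_prefix _ _).isInfix.trans (List.drop_suffix _ _).isInfix, hiso, hlt⟩

theorem containsShuffle_iff_exists_index (d : α) {τ ν σ : List α} :
    ContainsShuffle τ ν σ ↔ ∃ i p j : ℕ, IsOrderIsoAt d τ σ i ∧ i + τ.length ≤ p ∧ p + 1 ≤ j ∧
      IsOrderIsoAt d ν σ j ∧ (∀ s < τ.length, σ.getD (i + s) d < σ.getD p d) ∧
      (∀ t < ν.length, σ.getD (j + t) d < σ.getD p d) := by
  simp only [ContainsShuffle, containsFactorBelow_iff_exists_segment, isOrderIsoAt_iff d]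
  constructor
  · rintro ⟨L, x, R, rfl, ⟨i, hi, hτ, hτx⟩, ⟨j, hj, hν, hνx⟩⟩
    have hx : (L ++ x :: R).getD L.length d = x := by simp
    have hsegτ : ((L ++ x :: R).drop i).take τ.length = (L.drop i).take τ.length := by
      rw [List.drop_append_of_le_length (by omega), List.take_append_of_le_length (by simp; omega)]
    have hsegν :
        ((L ++ x :: R).drop (L.length + 1 + j)).take ν.length = (R.drop j).take ν.length := by
      simp [List.drop_append, Nat.add_assoc, Nat.add_comm 1 j, List.drop_eq_nil_of_le]
    have hlen : (L ++ x :: R).length = L.length + 1 + R.length := by simp; omega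
    refine ⟨i, L.length, L.length + 1 + j, ⟨by omega, hsegτ ▸ hτ⟩, hi, by omega,
      ⟨by omega, hsegν ▸ hν⟩, ?_, ?_⟩
    · rw [hx]
      exact (forall_mem_take_drop_iff d (P := (· < x)) (by omega)).mp (hsegτ ▸ hτx)
    · rw [hx]
      exact (forall_mem_take_drop_iff d (P := (· < x)) (by omega)).mp (hsegν ▸ hνx)
  · rintro ⟨i, p, j, ⟨hi, hτ⟩, hip, hpj, ⟨hj, hν⟩, hτx, hνx⟩
    rw [← forall_mem_take_drop_iff d hi (P := (· < σ.getD p d))] at hτx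
    rw [← forall_mem_take_drop_iff d hj (P := (· < σ.getD p d))] at hνx
    have hp : p < σ.length := by omega
    have hsegτ : ((σ.take p).drop i).take τ.length = (σ.drop i).take τ.length := by
      rw [List.drop_take, List.take_take, min_eq_left (by omega)]
    have hsegν :
        ((σ.drop (p + 1)).drop (j - (p + 1))).take ν.length = (σ.drop j).take ν.length := by
      rw [List.drop_drop, Nat.add_sub_cancel' hpj]
    refine ⟨σ.take p, σ.getD p d, σ.drop (p + 1), ?_,
      ⟨i, by simp; omega, hsegτ ▸ hτ, hsegτ ▸ hτx⟩,
      ⟨j - (p + 1), by simp; omega, hsegν ▸ hν, hsegν ▸ hνx⟩⟩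
    rw [List.getD_eq_getElem _ _ hp, ← List.drop_eq_getElem_cons hp, List.take_append_drop]

theorem isOrderIsoAt_map_toDual {d : α} {w σ : List α} {i : ℕ} :
    IsOrderIsoAt (OrderDual.toDual d) (w.map OrderDual.toDual) (σ.map OrderDual.toDual) i ↔
      IsOrderIsoAt d w σ i := by
  simp only [isOrderIsoAt_iff, List.length_map, ← List.map_drop, ← List.map_take,
    orderIsomorphic_map_toDual_iff]

theorem ncard_avoiders_eq_of_perm {τ ν τ' ν' : List α} {t u : List α → List α}
    (ht : IsFactorSymmetry τ τ' t) (hu : IsFactorSymmetry ν ν' u) {C : List α → Prop}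
    (hC : ∀ σ σ', σ.Perm σ' → C σ → C σ') :
    {σ | C σ ∧ ¬ ContainsShuffle τ ν σ}.ncard =
      {σ | C σ ∧ ¬ ContainsShuffle τ' ν' σ}.ncard := by
  obtain ⟨e, he⟩ := exists_equiv_coe_eq_of_ncard_eq (S := {σ | ¬ ContainsShuffle τ ν σ})
    (T := {σ | ¬ ContainsShuffle τ' ν' σ}) (ncard_fiber_avoiders_eq ht hu)
  have hCe (σ : {σ | ¬ ContainsShuffle τ ν σ}) : C σ ↔ C (e σ) :=
    ⟨hC _ _ (Multiset.coe_eq_coe.mp (he σ).symm), hC _ _ (Multiset.coe_eq_coe.mp (he σ))⟩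
  refine Set.ncard_congr (fun σ hσ => e ⟨σ, hσ.2⟩) (fun σ hσ => ⟨(hCe _).mp hσ.1, (e _).2⟩)
    (fun σ σ' _ _ h => congrArg Subtype.val (e.injective (Subtype.ext h))) fun σ hσ => ?_
  refine ⟨e.symm ⟨σ, hσ.2⟩, ⟨(hCe _).mpr (by simpa using hσ.1), (e.symm _).2⟩, by simp⟩

theorem isFactorSymmetry_of_reverse_or_id {f : List α → List α}
    (hf : f = List.reverse ∨ f = id) (w : List α) : IsFactorSymmetry w (f w) f := by
  rcases hf with rfl | rfl
  · exact ⟨List.reverse_reverse, List.reverse_perm, fun σ => containsFactor_reverse_iff⟩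
  · exact ⟨fun _ => rfl, List.Perm.refl, fun _ => Iff.rfl⟩

theorem IsCompOf.perm {A : Finset ℕ} {n m : ℕ} {σ σ' : List ℕ} (h : σ.Perm σ')
    (hσ : IsCompOf A n m σ) : IsCompOf A n m σ' :=
  ⟨fun x hx => hσ.1 x (h.mem_iff.mpr hx), h.sum_eq ▸ hσ.2.1, h.length_eq ▸ hσ.2.2⟩

theorem shuffleTopOccurs_iff_containsShuffle {τ ν σ : List ℕ} :
    ShuffleTopOccurs τ ν σ ↔ ContainsShuffle τ ν σ :=
  -- `WordIsoAt` is `IsOrderIsoAt 0` on `ℕ`, so the right-hand side unfolds to `ShuffleTopOccurs`.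
  (containsShuffle_iff_exists_index 0).symm

theorem shuffleBotOccurs_iff_containsShuffle {τ ν σ : List ℕ} :
    ShuffleBotOccurs τ ν σ ↔ ContainsShuffle (τ.map OrderDual.toDual) (ν.map OrderDual.toDual)
      (σ.map OrderDual.toDual) := by
  rw [containsShuffle_iff_exists_index (OrderDual.toDual 0)]
  simp only [isOrderIsoAt_map_toDual, List.length_map, List.getD_map, OrderDual.toDual_lt_toDual]
  rfl

theorem exists_isFactorSymmetry_map_toDual {f : List ℕ → List ℕ}
    (hf : f = List.reverse ∨ f = id) (w : List ℕ) :
    ∃ t : List ℕᵒᵈ → List ℕᵒᵈ,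
      IsFactorSymmetry (w.map OrderDual.toDual) ((f w).map OrderDual.toDual) t := by
  rcases hf with rfl | rfl
  · exact ⟨List.reverse, by
      simpa [List.map_reverse] using isFactorSymmetry_of_reverse_or_id (.inl rfl) (w.map _)⟩
  · exact ⟨id, isFactorSymmetry_of_reverse_or_id (.inr rfl) _⟩

theorem ncard_compositions_avoiding_top_eq {τ ν τ' ν' : List ℕ} {t u : List ℕ → List ℕ}
    (ht : IsFactorSymmetry τ τ' t) (hu : IsFactorSymmetry ν ν' u) (A : Finset ℕ) (n m : ℕ) :
    {σ | IsCompOf A n m σ ∧ ¬ ShuffleTopOccurs τ ν σ}.ncard =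
      {σ | IsCompOf A n m σ ∧ ¬ ShuffleTopOccurs τ' ν' σ}.ncard := by
  simp only [shuffleTopOccurs_iff_containsShuffle]
  exact ncard_avoiders_eq_of_perm ht hu fun _ _ h => IsCompOf.perm h

theorem ncard_compositions_avoiding_bot_eq {τ ν τ' ν' : List ℕ} {t u : List ℕᵒᵈ → List ℕᵒᵈ}
    (ht : IsFactorSymmetry (τ.map OrderDual.toDual) (τ'.map OrderDual.toDual) t)
    (hu : IsFactorSymmetry (ν.map OrderDual.toDual) (ν'.map OrderDual.toDual) u)
    (A : Finset ℕ) (n m : ℕ) :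
    {σ | IsCompOf A n m σ ∧ ¬ ShuffleBotOccurs τ ν σ}.ncard =
      {σ | IsCompOf A n m σ ∧ ¬ ShuffleBotOccurs τ' ν' σ}.ncard := by
  have hdual (τ ν : List ℕ) : {σ | IsCompOf A n m σ ∧ ¬ ShuffleBotOccurs τ ν σ} =
      List.map OrderDual.toDual ⁻¹' {σ | IsCompOf A n m (σ.map OrderDual.ofDual) ∧
        ¬ ContainsShuffle (τ.map OrderDual.toDual) (ν.map OrderDual.toDual) σ} := by
    ext σ
    simp [shuffleBotOccurs_iff_containsShuffle]
  have hsurj := List.map_surjective_iff.mpr (OrderDual.toDual (α := ℕ)).surjective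
  have hpre (S : Set (List ℕᵒᵈ)) : (List.map OrderDual.toDual ⁻¹' S).ncard = S.ncard :=
    Set.ncard_preimage_of_injective_subset_range
      (List.map_injective_iff.mpr OrderDual.toDual.injective) (by simp [hsurj.range_eq])
  rw [hdual, hdual, hpre, hpre]
  exact ncard_avoiders_eq_of_perm ht hu fun _ _ h => IsCompOf.perm (h.map _)

theorem stmt7_general (τ ν : List ℕ)
    (f₁ f₂ : List ℕ → List ℕ)
    (hf₁ : f₁ = List.reverse ∨ f₁ = id) (hf₂ : f₂ = List.reverse ∨ f₂ = id) :
    ∀ (A : Finset ℕ), (∀ a ∈ A, 0 < a) → ∀ n m : ℕ,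
      (Set.ncard {σ : List ℕ | IsCompOf A n m σ ∧ ¬ ShuffleTopOccurs τ ν σ}
        = Set.ncard {σ : List ℕ | IsCompOf A n m σ ∧ ¬ ShuffleTopOccurs (f₁ τ) (f₂ ν) σ}) ∧
      (Set.ncard {σ : List ℕ | IsCompOf A n m σ ∧ ¬ ShuffleBotOccurs τ ν σ}
        = Set.ncard {σ : List ℕ | IsCompOf A n m σ ∧ ¬ ShuffleBotOccurs (f₁ τ) (f₂ ν) σ}) := by
  intro A _ n m
  obtain ⟨t, ht⟩ := exists_isFactorSymmetry_map_toDual hf₁ τ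
  obtain ⟨u, hu⟩ := exists_isFactorSymmetry_map_toDual hf₂ ν
  exact ⟨ncard_compositions_avoiding_top_eq (isFactorSymmetry_of_reverse_or_id hf₁ τ)
    (isFactorSymmetry_of_reverse_or_id hf₂ ν) A n m,
    ncard_compositions_avoiding_bot_eq ht hu A n m⟩

theorem stmt7 (τ ν : List ℕ) (hτ : τ ≠ []) (hν : ν ≠ [])
    (hτpos : ∀ x ∈ τ, 0 < x) (hνpos : ∀ x ∈ ν, 0 < x)
    (f₁ f₂ : List ℕ → List ℕ)
    (hf₁ : f₁ = List.reverse ∨ f₁ = id) (hf₂ : f₂ = List.reverse ∨ f₂ = id) :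
    ∀ (A : Finset ℕ), (∀ a ∈ A, 0 < a) → ∀ n m : ℕ,
      (Set.ncard {σ : List ℕ | IsCompOf A n m σ ∧ ¬ ShuffleTopOccurs τ ν σ}
        = Set.ncard {σ : List ℕ | IsCompOf A n m σ ∧ ¬ ShuffleTopOccurs (f₁ τ) (f₂ ν) σ}) ∧
      (Set.ncard {σ : List ℕ | IsCompOf A n m σ ∧ ¬ ShuffleBotOccurs τ ν σ}
        = Set.ncard {σ : List ℕ | IsCompOf A n m σ ∧ ¬ ShuffleBotOccurs (f₁ τ) (f₂ ν) σ}) :=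
  stmt7_general τ ν f₁ f₂ hf₁ hf₂
end

section
/- Let A be a finite nonempty set of positive integers and let φ be the multi-pattern 1-1'2'. Then in ℚ⟦x,y⟧: Σ_{n,m≥0} |C_{n;m}^A(φ)| x^n y^m = 1 + ( y·Σ_{a∈A} x^a ) / ∏_{a∈A}(1 − x^a y), where each factor (1−x^a y) is invertible in ℚ⟦x,y⟧. -/
/-- `σ` contains the multi-pattern 1-1'2': there are indices `i < j` with `j+1`
still a valid position, such that `σ j < σ (j+1)` (0-indexed). -/
def Contains112 (σ : List ℕ) : Prop :=
  ∃ i j : ℕ, i < j ∧ j + 1 < σ.length ∧ σ.getD j 0 < σ.getD (j + 1) 0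

/-- The number of compositions of `n` with `m` parts in `A` avoiding 1-1'2'. -/
noncomputable def count112 (A : Finset ℕ) (n m : ℕ) : ℕ :=
  Set.ncard {σ : List ℕ | IsCompOf A n m σ ∧ ¬ Contains112 σ}

/-!
An avoider of 1-1'2' is either empty or a letter `a ∈ A` followed by a weakly decreasing word over
`A`, so its series is `1 + y (∑ₐ xᵃ) D_A`, where `D_s` is the series of weakly decreasing words
over `s`. If `b > max s`, a weakly decreasing word over `insert b s` either avoids `b`, and is then
a word over `s`, or contains `b` and then starts with `b`; hence
`D_{insert b s} = D_s + x^b y D_{insert b s}`, and by induction on `s`,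
`D_s = ∏_{a ∈ s} (1 - x^a y)⁻¹`.
-/

namespace Compositions112

open Finset MvPowerSeries

section Lists

variable {α : Type*} [DecidableEq α]

def listsOfLength (s : Finset α) : ℕ → Finset (List α)
  | 0 => {[]}
  | m + 1 => (s ×ˢ listsOfLength s m).image fun p => p.1 :: p.2

theorem mem_listsOfLength {s : Finset α} {m : ℕ} {σ : List α} :
    σ ∈ listsOfLength s m ↔ σ.length = m ∧ ∀ x ∈ σ, x ∈ s := by
  induction m generalizing σ with
  | zero =>
    simp only [listsOfLength, mem_singleton, List.length_eq_zero_iff, iff_self_and]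
    rintro rfl
    simp
  | succ m ih =>
    cases σ with
    | nil => simp [listsOfLength]
    | cons a τ => simp [listsOfLength, ih, and_left_comm]

theorem card_filter_listsOfLength_succ (s : Finset α) (m : ℕ) (P : List α → Prop)
    [DecidablePred P] :
    #((listsOfLength s (m + 1)).filter P) =
      ∑ a ∈ s, #((listsOfLength s m).filter fun τ => P (a :: τ)) := by
  have hcons : Function.Injective fun p : α × List α => p.1 :: p.2 :=
    fun p q h => Prod.ext (List.cons.inj h).1 (List.cons.inj h).2
  rw [listsOfLength, filter_image, card_image_of_injective _ hcons]
  simp only [card_filter, sum_product]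

theorem filter_notMem_listsOfLength_insert {s : Finset α} {b : α} (hb : b ∉ s) (m : ℕ) :
    (listsOfLength (insert b s) m).filter (b ∉ ·) = listsOfLength s m := by
  ext σ
  simp only [mem_filter, mem_listsOfLength, mem_insert]
  constructor
  · rintro ⟨⟨hl, hσ⟩, hbσ⟩
    exact ⟨hl, fun x hx => (hσ x hx).resolve_left (by rintro rfl; exact hbσ hx)⟩
  · rintro ⟨hl, hσ⟩
    exact ⟨⟨hl, fun x hx => Or.inr (hσ x hx)⟩, fun h => hb (hσ b h)⟩

end Lists

theorem eq_cons_of_pairwise_ge {α : Type*} [PartialOrder α] {σ : List α} {b : α}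
    (hσ : σ.Pairwise (· ≥ ·)) (hle : ∀ x ∈ σ, x ≤ b) (hb : b ∈ σ) : σ = b :: σ.tail := by
  cases σ with
  | nil => simp at hb
  | cons a τ =>
    rcases List.mem_cons.mp hb with rfl | hbτ
    · rfl
    · rw [le_antisymm (hle a List.mem_cons_self) ((List.pairwise_cons.mp hσ).1 b hbτ)]
      rfl

def decreasingLists (s : Finset ℕ) (n m : ℕ) : Finset (List ℕ) :=
  (listsOfLength s m).filter fun σ => σ.sum = n ∧ σ.Pairwise (· ≥ ·)

theorem card_decreasingLists_empty (n m : ℕ) :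
    #(decreasingLists ∅ n m) = if n = 0 ∧ m = 0 then 1 else 0 := by
  cases m with
  | zero =>
    by_cases hn : n = 0 <;> simp [decreasingLists, listsOfLength, filter_singleton, hn, eq_comm]
  | succ m => simp [decreasingLists, listsOfLength]

theorem card_filter_mem_decreasingLists_insert {s : Finset ℕ} {b : ℕ} (hb : ∀ x ∈ s, x < b)
    (n m : ℕ) :
    #((decreasingLists (insert b s) n m).filter (b ∈ ·)) =
      if b ≤ n ∧ 1 ≤ m then #(decreasingLists (insert b s) (n - b) (m - 1)) else 0 := by
  have hle : ∀ x ∈ insert b s, x ≤ b := by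
    simpa using fun x hx => (hb x hx).le
  split_ifs with h
  · rw [← card_image_of_injective (decreasingLists (insert b s) (n - b) (m - 1))
      List.cons_injective]
    congr 1
    ext σ
    simp only [decreasingLists, mem_filter, mem_image, mem_listsOfLength]
    constructor
    · rintro ⟨⟨⟨hl, hσ⟩, hsum, hdec⟩, hbσ⟩
      obtain ⟨τ, rfl⟩ : ∃ τ, σ = b :: τ :=
        ⟨_, eq_cons_of_pairwise_ge hdec (fun x hx => hle x (hσ x hx)) hbσ⟩
      simp only [List.length_cons, List.sum_cons, List.mem_cons, forall_eq_or_imp] at hl hσ hsum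
      exact ⟨τ, ⟨⟨by omega, hσ.2⟩, by omega, hdec.of_cons⟩, rfl⟩
    · rintro ⟨τ, ⟨⟨hl, hτ⟩, hsum, hdec⟩, rfl⟩
      simp only [List.length_cons, List.sum_cons, List.mem_cons, forall_eq_or_imp,
        List.pairwise_cons, true_or, and_true]
      exact ⟨⟨by omega, mem_insert_self b s, hτ⟩, by omega, fun x hx => hle x (hτ x hx), hdec⟩
  · rw [card_eq_zero, filter_eq_empty_iff]
    intro σ hσ hbσ
    simp only [decreasingLists, mem_filter, mem_listsOfLength] at hσ
    exact h ⟨hσ.2.1 ▸ List.le_sum_of_mem hbσ, hσ.1.1 ▸ List.length_pos_of_mem hbσ⟩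

theorem card_decreasingLists_insert {s : Finset ℕ} {b : ℕ} (hb : ∀ x ∈ s, x < b) (n m : ℕ) :
    #(decreasingLists (insert b s) n m) = #(decreasingLists s n m) +
      if b ≤ n ∧ 1 ≤ m then #(decreasingLists (insert b s) (n - b) (m - 1)) else 0 := by
  rw [← card_filter_mem_decreasingLists_insert hb, add_comm,
    ← card_filter_add_card_filter_not (fun σ => b ∈ σ)]
  congr 2
  rw [decreasingLists, filter_comm,
    filter_notMem_listsOfLength_insert (fun h => (hb b h).false), decreasingLists]

theorem not_contains112_iff {σ : List ℕ} : ¬ Contains112 σ ↔ σ.tail.Pairwise (· ≥ ·) := by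
  rw [← List.isChain_iff_pairwise, List.isChain_iff_getElem]
  cases σ with
  | nil => simp [Contains112]
  | cons a τ =>
    simp only [Contains112, List.tail_cons, List.length_cons, not_exists, not_and, not_lt]
    constructor
    · intro H i hi
      simpa [List.getD_eq_getElem, hi, Nat.lt_of_succ_lt hi]
        using H 0 (i + 1) (by omega) (by omega)
    · intro H i j hij hj
      obtain ⟨k, rfl⟩ := Nat.exists_eq_add_one_of_ne_zero (by omega : j ≠ 0)
      simpa [List.getD_eq_getElem, Nat.lt_of_succ_lt_succ hj, Nat.lt_of_succ_lt hj]
        using H k (by omega)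

theorem count112_eq_card (A : Finset ℕ) (n m : ℕ) :
    count112 A n m =
      #((listsOfLength A m).filter fun σ => σ.sum = n ∧ σ.tail.Pairwise (· ≥ ·)) := by
  rw [count112, ← Set.ncard_coe_finset]
  congr 1
  ext σ
  simp only [IsCompOf, not_contains112_iff, Set.mem_ofPred_eq, coe_filter, mem_listsOfLength]
  tauto

theorem count112_eq (A : Finset ℕ) (n m : ℕ) :
    count112 A n m = (if n = 0 ∧ m = 0 then 1 else 0) +
      ∑ a ∈ A, if a ≤ n ∧ 1 ≤ m then #(decreasingLists A (n - a) (m - 1)) else 0 := by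
  rw [count112_eq_card]
  cases m with
  | zero => by_cases hn : n = 0 <;> simp [listsOfLength, filter_singleton, hn, eq_comm]
  | succ m =>
    simp only [card_filter_listsOfLength_succ, List.sum_cons, List.tail_cons,
      Nat.add_one_ne_zero, and_false, if_false, zero_add, le_add_iff_nonneg_left, zero_le,
      and_true, add_tsub_cancel_right]
    refine sum_congr rfl fun a _ => ?_
    split_ifs with han
    · rw [decreasingLists]
      congr 1
      exact filter_congr fun τ _ => and_congr_left' (by omega)
    · exact card_eq_zero.mpr (filter_eq_empty_iff.mpr fun τ _ h => han (by omega))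

section Series

variable (R : Type*) [CommRing R]

def bivariate (f : ℕ → ℕ → R) : MvPowerSeries (Fin 2) R := fun e => f (e 0) (e 1)

variable {R}

theorem coeff_bivariate (f : ℕ → ℕ → R) (e : Fin 2 →₀ ℕ) :
    coeff e (bivariate R f) = f (e 0) (e 1) := rfl

theorem eq_bivariate_of_coeff {F : MvPowerSeries (Fin 2) R} {f : ℕ → ℕ → R}
    (hF : ∀ n m, coeff (Finsupp.single 0 n + Finsupp.single 1 m) F = f n m) :
    F = bivariate R f := by
  ext e
  rw [coeff_bivariate, ← hF]
  congr
  ext i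
  fin_cases i <;> simp

theorem one_eq_bivariate :
    (1 : MvPowerSeries (Fin 2) R) = bivariate R fun n m => if n = 0 ∧ m = 0 then 1 else 0 := by
  ext e
  simp [coeff_one, coeff_bivariate, Finsupp.ext_iff, Fin.forall_fin_two]

theorem X_pow_mul_X_mul_bivariate (a : ℕ) (f : ℕ → ℕ → R) :
    X 0 ^ a * X 1 * bivariate R f =
      bivariate R fun n m => if a ≤ n ∧ 1 ≤ m then f (n - a) (m - 1) else 0 := by
  have hmon : (X 0 ^ a * X 1 : MvPowerSeries (Fin 2) R) =
      monomial (Finsupp.single 0 a + Finsupp.single 1 1) 1 := by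
    rw [X_pow_eq, X, monomial_mul_monomial, one_mul]
  ext e
  simp [hmon, coeff_monomial_mul, coeff_bivariate, Finsupp.le_def, Fin.forall_fin_two]

theorem constantCoeff_one_sub_X_pow_mul_X (a : ℕ) :
    constantCoeff (1 - X 0 ^ a * X 1 : MvPowerSeries (Fin 2) R) = 1 := by
  simp

theorem isUnit_one_sub_X_pow_mul_X (a : ℕ) :
    IsUnit (1 - X 0 ^ a * X 1 : MvPowerSeries (Fin 2) R) := by
  rw [isUnit_iff_constantCoeff, constantCoeff_one_sub_X_pow_mul_X]
  exact isUnit_one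

variable (R) in
def decreasingSeries (s : Finset ℕ) : MvPowerSeries (Fin 2) R :=
  bivariate R fun n m => (#(decreasingLists s n m) : R)

theorem decreasingSeries_insert {s : Finset ℕ} {b : ℕ} (hb : ∀ x ∈ s, x < b) :
    decreasingSeries R (insert b s) =
      decreasingSeries R s + X 0 ^ b * X 1 * decreasingSeries R (insert b s) := by
  unfold decreasingSeries
  rw [X_pow_mul_X_mul_bivariate]
  ext e
  rw [map_add, coeff_bivariate, coeff_bivariate, coeff_bivariate, card_decreasingLists_insert hb]
  split_ifs <;> simp

theorem decreasingSeries_mul_prod (s : Finset ℕ) :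
    decreasingSeries R s * ∏ a ∈ s, (1 - X 0 ^ a * X 1) = 1 := by
  induction s using Finset.induction_on_max with
  | empty =>
    rw [prod_empty, mul_one, one_eq_bivariate, decreasingSeries]
    ext e
    simp [coeff_bivariate, card_decreasingLists_empty]
  | insert b s hb ih =>
    have hstep : decreasingSeries R (insert b s) * (1 - X 0 ^ b * X 1) = decreasingSeries R s := by
      rw [mul_one_sub, sub_eq_iff_eq_add, mul_comm, ← decreasingSeries_insert hb]
    rw [prod_insert fun h => (hb b h).false, ← mul_assoc, hstep, ih]

theorem bivariate_count112 (A : Finset ℕ) :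
    bivariate R (fun n m => (count112 A n m : R)) =
      1 + X 1 * (∑ a ∈ A, X 0 ^ a) * decreasingSeries R A := by
  have hcomm : ∀ a, (X 1 * X 0 ^ a : MvPowerSeries (Fin 2) R) = X 0 ^ a * X 1 :=
    fun a => mul_comm _ _
  simp only [mul_sum, sum_mul, hcomm, decreasingSeries, X_pow_mul_X_mul_bivariate]
  ext e
  simp [one_eq_bivariate, coeff_bivariate, count112_eq]

theorem inv_prod_one_sub_X_pow_mul_X {k : Type*} [Field k] (s : Finset ℕ) :
    (∏ a ∈ s, (1 - X 0 ^ a * X 1 : MvPowerSeries (Fin 2) k))⁻¹ = decreasingSeries k s := by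
  have hprod : constantCoeff (∏ a ∈ s, (1 - X 0 ^ a * X 1 : MvPowerSeries (Fin 2) k)) = 1 := by
    rw [map_prod]
    exact prod_eq_one fun a _ => constantCoeff_one_sub_X_pow_mul_X a
  exact (MvPowerSeries.inv_eq_iff_mul_eq_one (hprod ▸ one_ne_zero)).mpr
    (decreasingSeries_mul_prod s)

end Series

end Compositions112

open Compositions112 in
open MvPowerSeries in
theorem stmt9_general (A : Finset ℕ)
    (F : MvPowerSeries (Fin 2) ℚ)
    (hF : ∀ n m : ℕ,
      (MvPowerSeries.coeff (Finsupp.single 0 n + Finsupp.single 1 m)) F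
        = (count112 A n m : ℚ)) :
    (∀ a ∈ A, IsUnit (1 - (X 0 : MvPowerSeries (Fin 2) ℚ) ^ a * X 1)) ∧
    F = 1 + (X 1 : MvPowerSeries (Fin 2) ℚ) * (∑ a ∈ A, (X 0) ^ a) *
          (∏ a ∈ A, (1 - (X 0 : MvPowerSeries (Fin 2) ℚ) ^ a * X 1))⁻¹ := by
  refine ⟨fun a _ => isUnit_one_sub_X_pow_mul_X a, ?_⟩
  rw [inv_prod_one_sub_X_pow_mul_X, eq_bivariate_of_coeff hF, bivariate_count112]

open MvPowerSeries in
theorem stmt9 (A : Finset ℕ) (hA : A.Nonempty) (hpos : ∀ a ∈ A, 0 < a)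
    (F : MvPowerSeries (Fin 2) ℚ)
    (hF : ∀ n m : ℕ,
      (MvPowerSeries.coeff (Finsupp.single 0 n + Finsupp.single 1 m)) F
        = (count112 A n m : ℚ)) :
    (∀ a ∈ A, IsUnit (1 - (X 0 : MvPowerSeries (Fin 2) ℚ) ^ a * X 1)) ∧
    F = 1 + (X 1 : MvPowerSeries (Fin 2) ℚ) * (∑ a ∈ A, (X 0) ^ a) *
          (∏ a ∈ A, (1 - (X 0 : MvPowerSeries (Fin 2) ℚ) ^ a * X 1))⁻¹ :=
  stmt9_general A F hF
end
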